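/- arXiv:1912.06134 — 5 statements merged into one kernel-verified Lean document; each statement's English description precedes it below -/
import Mathlib

section
/- Let A be the N×N complex circulant matrix associated with the first Ding–Helleseth sequence. Then det(A) = (p+1)·((q−1)/2)^p·((p−1)²(q−1)/4 − p)^{(q−1)/2}·((q−1)/4)^{(p−1)(q−1)/2} if q ≡ 1 (mod 4), and det(A) = (p+1)·((q−1)/2)^p·((p−1)²(q+1)/4 + p)^{(q−1)/2}·((q+1)/4)^{(p−1)(q−1)/2} if q ≡ 3 (mod 4). -/
open Finset

/-- `ξ_N = exp(2πi/N)`, a primitive `N`-th root of unity. -/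
noncomputable def DHxi (N : ℕ) : ℂ := Complex.exp (2 * Real.pi * Complex.I / N)

/-- Gauss period: `Σ_{a ∈ D} ξ_N^a`. -/
noncomputable def DHeta (N : ℕ) (D : Finset (ZMod N)) : ℂ := ∑ a ∈ D, DHxi N ^ a.val

/-- Ding–Helleseth generalized cyclotomic class
`D₀ = {g^(2t) x^i : 0 ≤ t ≤ e/2 - 1, i ∈ {0,1}}` in `ZMod (p*q)`, where `e = (p-1)(q-1)/2`. -/
def DHD0 (p q g x : ℕ) : Finset (ZMod (p * q)) :=
  (Finset.range ((p - 1) * (q - 1) / 4) ×ˢ Finset.range 2).image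
    (fun ti => (g : ZMod (p * q)) ^ (2 * ti.1) * (x : ZMod (p * q)) ^ ti.2)

/-- `D₁ = g · D₀`. -/
def DHD1 (p q g x : ℕ) : Finset (ZMod (p * q)) :=
  (DHD0 p q g x).image (fun d => (g : ZMod (p * q)) * d)

/-- `P = {p, 2p, …, (q-1)p}` as a subset of `ZMod (p*q)`. -/
def DHP (p q : ℕ) : Finset (ZMod (p * q)) :=
  (Finset.Icc 1 (q - 1)).image (fun k => ((k * p : ℕ) : ZMod (p * q)))

/-- `Q = {q, 2q, …, (p-1)q}` as a subset of `ZMod (p*q)`. -/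
def DHQ (p q : ℕ) : Finset (ZMod (p * q)) :=
  (Finset.Icc 1 (p - 1)).image (fun k => ((k * q : ℕ) : ZMod (p * q)))

/-- First Ding–Helleseth sequence: `s_i = 1` iff `i mod N ∈ D₁ ∪ P`. -/
def DHs1 (p q g x : ℕ) (i : ℕ) : ℕ :=
  if (i : ZMod (p * q)) ∈ DHD1 p q g x ∪ DHP p q then 1 else 0

/-- Second Ding–Helleseth sequence: `s_i = 1` iff `i mod N ∈ D₁ ∪ Q`. -/
def DHs2 (p q g x : ℕ) (i : ℕ) : ℕ :=
  if (i : ZMod (p * q)) ∈ DHD1 p q g x ∪ DHQ p q then 1 else 0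

/-- Circulant matrix of the first sequence: `a_{i,j} = s_{(i-j) mod N}`. -/
noncomputable def DHA1 (p q g x : ℕ) : Matrix (Fin (p * q)) (Fin (p * q)) ℂ :=
  fun i j => (DHs1 p q g x ((((i : ℕ) : ZMod (p * q)) - ((j : ℕ) : ZMod (p * q))).val) : ℂ)

/-- Circulant matrix of the second sequence: `a_{i,j} = s_{(i-j) mod N}`. -/
noncomputable def DHA2 (p q g x : ℕ) : Matrix (Fin (p * q)) (Fin (p * q)) ℂ :=
  fun i j => (DHs2 p q g x ((((i : ℕ) : ZMod (p * q)) - ((j : ℕ) : ZMod (p * q))).val) : ℂ)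

/-- `S(z) = Σ_{i=0}^{N-1} s_i z^i` for the first sequence. -/
noncomputable def DHSval1 (p q g x : ℕ) (z : ℂ) : ℂ :=
  ∑ i ∈ Finset.range (p * q), (DHs1 p q g x i : ℂ) * z ^ i

/-- `S(z) = Σ_{i=0}^{N-1} s_i z^i` for the second sequence. -/
noncomputable def DHSval2 (p q g x : ℕ) (z : ℂ) : ℂ :=
  ∑ i ∈ Finset.range (p * q), (DHs2 p q g x i : ℂ) * z ^ i

/-- `S(2) = Σ_{i=0}^{N-1} s_i 2^i` for the first sequence, as a natural number. -/
def DHS2num1 (p q g x : ℕ) : ℕ := ∑ i ∈ Finset.range (p * q), DHs1 p q g x i * 2 ^ i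

/-- `S(2) = Σ_{i=0}^{N-1} s_i 2^i` for the second sequence, as a natural number. -/
def DHS2num2 (p q g x : ℕ) : ℕ := ∑ i ∈ Finset.range (p * q), DHs2 p q g x i * 2 ^ i

/-- Nonzero quadratic residues modulo `q`. -/
def DHQR (q : ℕ) [NeZero q] : Finset (ZMod q) :=
  Finset.univ.filter (fun a => a ≠ 0 ∧ ∃ b : ZMod q, b * b = a)

/-- Quadratic nonresidues modulo `q`. -/
def DHQNR (q : ℕ) [NeZero q] : Finset (ZMod q) :=
  Finset.univ.filter (fun a => a ≠ 0 ∧ ¬∃ b : ZMod q, b * b = a)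



/-- Splitting a product over `range (a*b)` by division with remainder. -/
@[to_additive DH.sum_range_mul']
lemma DH.prod_range_mul' {β : Type*} [CommMonoid β] (a b : ℕ) (f : ℕ → β) :
    ∏ t ∈ range (a * b), f t = ∏ v ∈ range b, ∏ u ∈ range a, f (a * v + u) := by
  induction b with
  | zero => simp
  | succ b ih =>
      rw [Finset.prod_range_succ, ← ih, Nat.mul_succ,
        ← Finset.prod_range_mul_prod_Ico f (Nat.le_add_right _ _)]
      congr 1
      rw [Finset.prod_Ico_eq_prod_range]
      simp [add_comm]

/-- Affine reparametrization of a product over the cyclic group generated by `ζ`. -/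
lemma DH.prod_orderOf_affine {M β : Type*} [Monoid M] [CommMonoid β] (ζ : M) {d c : ℕ}
    (hd : orderOf ζ = d) (hd0 : 0 < d) (hc : Nat.Coprime c d) (a : ℕ) (F : M → β) :
    ∏ t ∈ range d, F (ζ ^ (c * t + a)) = ∏ t ∈ range d, F (ζ ^ t) := by
  have hmod : ∀ t, F (ζ ^ (c * t + a)) = F (ζ ^ ((c * t + a) % d)) := by
    intro t; rw [← hd, pow_mod_orderOf]
  have hinj : Set.InjOn (fun t => (c * t + a) % d) (range d) := by
    intro t ht t' ht' h
    simp only at h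
    have h1 : (c * t + a) % d = (c * t' + a) % d := h
    have h2 : c * t ≡ c * t' [MOD d] := by
      have := (Nat.ModEq.add_right_cancel' a (Nat.ModEq.symm h1)).symm
      exact this
    have h3 : t ≡ t' [MOD d] := h2.cancel_left_of_coprime (by rwa [Nat.coprime_comm] at hc)
    have := h3
    unfold Nat.ModEq at this
    rw [Nat.mod_eq_of_lt (mem_range.mp ht), Nat.mod_eq_of_lt (mem_range.mp ht')] at this
    exact this
  have himg : (range d).image (fun t => (c * t + a) % d) = range d := by
    apply Finset.eq_of_subset_of_card_le
    · intro s hs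
      simp only [mem_image] at hs
      obtain ⟨t, _, rfl⟩ := hs
      exact mem_range.mpr (Nat.mod_lt _ hd0)
    · rw [Finset.card_image_of_injOn hinj]
  calc ∏ t ∈ range d, F (ζ ^ (c * t + a))
      = ∏ t ∈ range d, F (ζ ^ ((c * t + a) % d)) := by
        exact Finset.prod_congr rfl (fun t _ => hmod t)
    _ = ∏ s ∈ (range d).image (fun t => (c * t + a) % d), F (ζ ^ s) :=
        (Finset.prod_image (f := fun s => F (ζ ^ s)) (fun t ht t' ht' h => hinj ht ht' h)).symm
    _ = ∏ t ∈ range d, F (ζ ^ t) := by rw [himg]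

/-- Affine reparametrization of a product over the cyclic group generated by `ζ`. -/
lemma DH.sum_orderOf_affine {M β : Type*} [Monoid M] [AddCommMonoid β] (ζ : M) {d c : ℕ}
    (hd : orderOf ζ = d) (hd0 : 0 < d) (hc : Nat.Coprime c d) (a : ℕ) (F : M → β) :
    ∑ t ∈ range d, F (ζ ^ (c * t + a)) = ∑ t ∈ range d, F (ζ ^ t) := by
  have hmod : ∀ t, F (ζ ^ (c * t + a)) = F (ζ ^ ((c * t + a) % d)) := by
    intro t; rw [← hd, pow_mod_orderOf]
  have hinj : Set.InjOn (fun t => (c * t + a) % d) (range d) := by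
    intro t ht t' ht' h
    simp only at h
    have h1 : (c * t + a) % d = (c * t' + a) % d := h
    have h2 : c * t ≡ c * t' [MOD d] := by
      have := (Nat.ModEq.add_right_cancel' a (Nat.ModEq.symm h1)).symm
      exact this
    have h3 : t ≡ t' [MOD d] := h2.cancel_left_of_coprime (by rwa [Nat.coprime_comm] at hc)
    have := h3
    unfold Nat.ModEq at this
    rw [Nat.mod_eq_of_lt (mem_range.mp ht), Nat.mod_eq_of_lt (mem_range.mp ht')] at this
    exact this
  have himg : (range d).image (fun t => (c * t + a) % d) = range d := by
    apply Finset.eq_of_subset_of_card_le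
    · intro s hs
      simp only [mem_image] at hs
      obtain ⟨t, _, rfl⟩ := hs
      exact mem_range.mpr (Nat.mod_lt _ hd0)
    · rw [Finset.card_image_of_injOn hinj]
  calc ∑ t ∈ range d, F (ζ ^ (c * t + a))
      = ∑ t ∈ range d, F (ζ ^ ((c * t + a) % d)) := by
        exact Finset.sum_congr rfl (fun t _ => hmod t)
    _ = ∑ s ∈ (range d).image (fun t => (c * t + a) % d), F (ζ ^ s) :=
        (Finset.sum_image (f := fun s => F (ζ ^ s)) (fun t ht t' ht' h => hinj ht ht' h)).symm
    _ = ∑ t ∈ range d, F (ζ ^ t) := by rw [himg]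



/-- The equivalence between `Fin n` and `ZMod n`. -/
def DH.finEquivZMod (n : ℕ) [NeZero n] : Fin n ≃ ZMod n where
  toFun i := ((i : ℕ) : ZMod n)
  invFun z := ⟨z.val, z.val_lt⟩
  left_inv i := by
    ext
    simp [ZMod.val_natCast, Nat.mod_eq_of_lt i.isLt]
  right_inv z := by simp [ZMod.natCast_zmod_val]

/-- Determinant of a circulant matrix as a product of character sums. -/
lemma DH.det_circulant {n : ℕ} [NeZero n] (v : ℕ → ℂ) (ψ : AddChar (ZMod n) ℂ)
    (hψ : Function.Injective ψ) :
    Matrix.det (Matrix.of fun i j : Fin n =>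
        v (((i : ℕ) : ZMod n) - ((j : ℕ) : ZMod n)).val) =
      ∏ k : ZMod n, ∑ z : ZMod n, v z.val * ψ (z * k) := by
  classical
  set e := DH.finEquivZMod n
  set B : Matrix (ZMod n) (ZMod n) ℂ := Matrix.of fun i j => v (i - j).val with hB
  have hsub : (Matrix.of fun i j : Fin n =>
      v (((i : ℕ) : ZMod n) - ((j : ℕ) : ZMod n)).val) = B.submatrix e e := rfl
  set V : Matrix (ZMod n) (ZMod n) ℂ := Matrix.of fun j k => ψ (-(j * k)) with hV
  set D : Matrix (ZMod n) (ZMod n) ℂ :=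
    Matrix.diagonal fun k => ∑ z : ZMod n, v z.val * ψ (z * k) with hD
  have key : B * V = V * D := by
    ext i k
    rw [Matrix.mul_apply, Matrix.mul_diagonal]
    calc ∑ j : ZMod n, B i j * V j k
        = ∑ z : ZMod n, B i (i - z) * V (i - z) k :=
          (Fintype.sum_equiv (Equiv.subLeft i) _ _ (fun z => rfl)).symm
      _ = ∑ z : ZMod n, v z.val * (ψ (z * k) * ψ (-(i * k))) := by
          apply Finset.sum_congr rfl
          intro z _
          have h1 : i - (i - z) = z := by ring
          have h2 : (-(( i - z) * k)) = z * k + -(i * k) := by ring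
          simp only [hB, hV, Matrix.of_apply, h1, h2, AddChar.map_add_eq_mul]
      _ = V i k * ∑ z : ZMod n, v z.val * ψ (z * k) := by
          rw [Finset.mul_sum]
          apply Finset.sum_congr rfl
          intro z _
          simp only [hV, Matrix.of_apply]
          ring
  have hVdet : V.det ≠ 0 := by
    have hVsub : V.submatrix e e = (Matrix.vandermonde fun i : Fin n => ψ (-(e i))).transpose := by
      ext i j
      simp only [Matrix.submatrix_apply, Matrix.transpose_apply, Matrix.vandermonde,
        hV, Matrix.of_apply]
      have : e i * e j = ((i : ℕ) : ZMod n) * e j := rfl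
      rw [this]
      have h2 : ((i : ℕ) : ZMod n) * e j = (i : ℕ) • (e j) := by
        rw [nsmul_eq_mul]
      rw [h2, ← neg_nsmul, AddChar.map_nsmul_eq_pow]
    have hinj : Function.Injective fun i : Fin n => ψ (-(e i)) := by
      intro i j h
      simp only at h
      exact e.injective (neg_injective (hψ h))
    have : V.det = (Matrix.vandermonde fun i : Fin n => ψ (-(e i))).transpose.det := by
      rw [← hVsub, Matrix.det_submatrix_equiv_self]
    rw [this, Matrix.det_transpose, Matrix.det_vandermonde]
    apply Finset.prod_ne_zero_iff.mpr
    intro i _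
    apply Finset.prod_ne_zero_iff.mpr
    intro j hj
    have hij : i < j := Finset.mem_Ioi.mp hj
    have : i ≠ j := ne_of_lt hij
    exact sub_ne_zero.mpr fun h => this (hinj h.symm)
  have hdetBD : B.det = D.det := by
    have := congrArg Matrix.det key
    rw [Matrix.det_mul, Matrix.det_mul] at this
    have h2 : B.det * V.det = D.det * V.det := by rw [this]; ring
    exact mul_right_cancel₀ hVdet h2
  rw [hsub, Matrix.det_submatrix_equiv_self, hdetBD, hD, Matrix.det_diagonal]

section FieldLemmas

variable {r : ℕ} [Fact r.Prime] {γ : ZMod r}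

lemma DH.pow_injOn (hord : orderOf γ = r - 1) :
    Set.InjOn (γ ^ ·) (Finset.range (r - 1)) := fun a ha b hb hab =>
  pow_injOn_Iio_orderOf (by simpa [hord] using Finset.mem_range.mp ha)
    (by simpa [hord] using Finset.mem_range.mp hb) hab

lemma DH.isUnit_of_orderOf (hord : orderOf γ = r - 1) (hr : 2 < r) : IsUnit γ :=
  IsUnit.of_pow_eq_one (n := r - 1) (hord ▸ pow_orderOf_eq_one γ) (by omega)

lemma DH.image_pow_eq (hord : orderOf γ = r - 1) (hr : 2 < r) :
    (Finset.range (r - 1)).image (γ ^ ·) = Finset.univ.erase 0 := by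
  have hu : IsUnit γ := DH.isUnit_of_orderOf hord hr
  apply Finset.eq_of_subset_of_card_le
  · intro s hs
    simp only [Finset.mem_image] at hs
    obtain ⟨m, _, rfl⟩ := hs
    exact Finset.mem_erase.mpr ⟨(hu.pow m).ne_zero, Finset.mem_univ _⟩
  · rw [Finset.card_erase_of_mem (Finset.mem_univ _), Finset.card_univ, ZMod.card,
      Finset.card_image_of_injOn (DH.pow_injOn hord), Finset.card_range]

lemma DH.sum_erase_mul (ψ' : AddChar (ZMod r) ℂ) (hψ' : ψ' ≠ 1) {c : ZMod r} (hc : c ≠ 0) :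
    ∑ z ∈ Finset.univ.erase 0, ψ' (z * c) = -1 := by
  have h0 : ∑ z : ZMod r, ψ' (z * c) = ∑ z : ZMod r, ψ' z :=
    Fintype.sum_equiv (Equiv.mulRight₀ c hc) _ _ (fun z => rfl)
  have h1 : ∑ z ∈ Finset.univ.erase 0, ψ' (z * c)
      = (∑ z : ZMod r, ψ' (z * c)) - ψ' ((0 : ZMod r) * c) :=
    Finset.sum_erase_eq_sub (Finset.mem_univ _)
  rw [h1, h0, AddChar.sum_eq_zero_of_ne_one hψ', zero_mul, AddChar.map_zero_eq_one]
  ring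

/-- The sum `∑_{m<r-1} ψ'(c·γ^(m+1))`, the full character sum over nonzero elements. -/
lemma DH.FP_eval (hord : orderOf γ = r - 1) (hr : 2 < r) (ψ' : AddChar (ZMod r) ℂ)
    (hψ' : ψ' ≠ 1) (c : ZMod r) :
    ∑ m ∈ Finset.range (r - 1), ψ' (c * γ ^ (m + 1))
      = if c = 0 then ((r : ℂ) - 1) else -1 := by
  split_ifs with hc
  · subst hc
    simp only [zero_mul, AddChar.map_zero_eq_one, Finset.sum_const, Finset.card_range,
      nsmul_eq_mul, mul_one]
    have : (1:ℕ) ≤ r := by omega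
    push_cast [Nat.cast_sub this]
    ring
  · have h1 : ∑ m ∈ Finset.range (r - 1), ψ' (c * γ ^ (m + 1))
        = ∑ m ∈ Finset.range (r - 1), ψ' (c * γ ^ m) := by
      have := DH.sum_orderOf_affine γ (c := 1) (d := r - 1) hord (by omega)
        (Nat.coprime_one_left _) 1 (fun w => ψ' (c * w))
      simpa using this
    rw [h1]
    have h2 : ∑ m ∈ Finset.range (r - 1), ψ' (c * γ ^ m)
        = ∑ z ∈ Finset.univ.erase 0, ψ' (c * z) := by
      rw [← DH.image_pow_eq hord hr, Finset.sum_image (fun a ha b hb hab =>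
        DH.pow_injOn hord ha hb hab)]
    rw [h2]
    have h3 : ∀ z : ZMod r, ψ' (c * z) = ψ' (z * c) := fun z => by rw [mul_comm]
    rw [Finset.sum_congr rfl (fun z _ => h3 z)]
    exact DH.sum_erase_mul ψ' hψ' hc

end FieldLemmas

/-- Gauss period `∑_{t<(r-1)/2} ψ'(c·γ^{2t})`. -/
noncomputable def DH.G (r : ℕ) (ψ' : AddChar (ZMod r) ℂ) (γ : ZMod r) (c : ZMod r) : ℂ :=
  ∑ t ∈ Finset.range ((r - 1) / 2), ψ' (c * (γ ^ 2) ^ t)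

section Gauss

variable {r : ℕ} [Fact r.Prime] {γ : ZMod r} (ψ' : AddChar (ZMod r) ℂ)

lemma DH.ord2 (hord : orderOf γ = r - 1) (hodd : r % 2 = 1) :
    orderOf (γ ^ 2) = (r - 1) / 2 := by
  have hr : 2 ≤ r := (Fact.out : r.Prime).two_le
  rw [orderOf_pow' γ (two_ne_zero), hord]
  congr 1
  have h2 : (2:ℕ) ∣ r - 1 := by omega
  rw [Nat.gcd_comm]
  exact Nat.gcd_eq_left h2

lemma DH.G_zero : DH.G r ψ' γ 0 = (((r - 1) / 2 : ℕ) : ℂ) := by simp [DH.G]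

lemma DH.G_shift (hord : orderOf γ = r - 1) (hodd : r % 2 = 1) (hr : 2 < r)
    (c : ZMod r) (a : ℕ) :
    DH.G r ψ' γ (c * (γ ^ 2) ^ a) = DH.G r ψ' γ c := by
  unfold DH.G
  have h := DH.sum_orderOf_affine (γ ^ 2) (DH.ord2 hord hodd) (by omega)
    (Nat.coprime_one_left _) a (fun w => ψ' (c * w))
  simp only [one_mul] at h
  rw [← h]
  apply Finset.sum_congr rfl
  intro t _
  congr 1
  rw [pow_add]
  ring

lemma DH.sum_pow_all (hord : orderOf γ = r - 1) (hr : 2 < r) (hψ' : ψ' ≠ 1) :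
    ∑ m ∈ Finset.range (r - 1), ψ' (γ ^ m) = -1 := by
  have h2 : ∑ z ∈ Finset.univ.erase 0, ψ' z = ∑ m ∈ Finset.range (r - 1), ψ' (γ ^ m) := by
    rw [← DH.image_pow_eq hord hr,
      Finset.sum_image (fun a ha b hb hab => DH.pow_injOn hord ha hb hab)]
  rw [← h2]
  have := DH.sum_erase_mul ψ' hψ' (one_ne_zero (α := ZMod r))
  simpa using this

lemma DH.G_one_add (hord : orderOf γ = r - 1) (hodd : r % 2 = 1) (hr : 2 < r)
    (hψ' : ψ' ≠ 1) : DH.G r ψ' γ 1 + DH.G r ψ' γ γ = -1 := by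
  have hd : 2 * ((r - 1) / 2) = r - 1 := by omega
  unfold DH.G
  calc (∑ t ∈ Finset.range ((r-1)/2), ψ' (1 * (γ ^ 2) ^ t))
        + ∑ t ∈ Finset.range ((r-1)/2), ψ' (γ * (γ ^ 2) ^ t)
      = ∑ t ∈ Finset.range ((r-1)/2), ∑ u ∈ Finset.range 2, ψ' (γ ^ (2 * t + u)) := by
        rw [← Finset.sum_add_distrib]
        apply Finset.sum_congr rfl
        intro t _
        rw [Finset.sum_range_succ, Finset.sum_range_one]
        have e0 : γ ^ (2 * t + 0) = 1 * (γ ^ 2) ^ t := by rw [← pow_mul]; ring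
        have e1 : γ ^ (2 * t + 1) = γ * (γ ^ 2) ^ t := by rw [← pow_mul]; ring
        rw [e0, e1]
    _ = ∑ m ∈ Finset.range (2 * ((r-1)/2)), ψ' (γ ^ m) :=
        (DH.sum_range_mul' 2 ((r-1)/2) (fun m => ψ' (γ ^ m))).symm
    _ = -1 := by rw [hd]; exact DH.sum_pow_all ψ' hord hr hψ'

lemma DH.not_isSquare (hord : orderOf γ = r - 1) (hodd : r % 2 = 1) (hr : 2 < r) :
    ¬ IsSquare γ := by
  rintro ⟨b, hb⟩
  have hu : IsUnit γ := DH.isUnit_of_orderOf hord hr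
  have hbne : b ≠ 0 := by
    rintro rfl
    rw [mul_zero] at hb
    exact hu.ne_zero (by simp [hb])
  have hpow : γ ^ ((r - 1) / 2) = 1 := by
    rw [hb, ← pow_two, ← pow_mul]
    have : 2 * ((r - 1) / 2) = r - 1 := by omega
    rw [this]
    exact ZMod.pow_card_sub_one_eq_one hbne
  have hdvd : r - 1 ∣ (r - 1) / 2 := by
    have := orderOf_dvd_of_pow_eq_one hpow
    rwa [hord] at this
  have := Nat.le_of_dvd (by omega) hdvd
  omega

lemma DH.chi_gen (hord : orderOf γ = r - 1) (hodd : r % 2 = 1) (hr : 2 < r) :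
    quadraticChar (ZMod r) γ = -1 :=
  (quadraticChar_neg_one_iff_not_isSquare).mpr (DH.not_isSquare hord hodd hr)

lemma DH.G_sub (hord : orderOf γ = r - 1) (hodd : r % 2 = 1) (hr : 2 < r) (hψ' : ψ' ≠ 1) :
    gaussSum ((quadraticChar (ZMod r)).ringHomComp (Int.castRingHom ℂ)) ψ'
      = DH.G r ψ' γ 1 - DH.G r ψ' γ γ := by
  have hd : 2 * ((r - 1) / 2) = r - 1 := by omega
  set χ := (quadraticChar (ZMod r)).ringHomComp (Int.castRingHom ℂ) with hχ
  have hχγ : χ γ = -1 := by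
    rw [hχ, MulChar.ringHomComp_apply, DH.chi_gen hord hodd hr]
    simp
  calc gaussSum χ ψ'
      = ∑ a : ZMod r, χ a * ψ' a := rfl
    _ = ∑ a ∈ Finset.univ.erase 0, χ a * ψ' a := by
        rw [Finset.sum_erase_eq_sub (Finset.mem_univ 0)]
        have : χ 0 = 0 := by
          rw [hχ, MulChar.ringHomComp_apply, MulChar.map_nonunit _ not_isUnit_zero]
          simp
        rw [this]
        ring
    _ = ∑ m ∈ Finset.range (r - 1), χ (γ ^ m) * ψ' (γ ^ m) := by
        rw [← DH.image_pow_eq hord hr,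
          Finset.sum_image (fun a ha b hb hab => DH.pow_injOn hord ha hb hab)]
    _ = ∑ m ∈ Finset.range (r - 1), (-1 : ℂ) ^ m * ψ' (γ ^ m) := by
        apply Finset.sum_congr rfl
        intro m _
        rw [map_pow, hχγ]
    _ = ∑ t ∈ Finset.range ((r-1)/2), ∑ u ∈ Finset.range 2,
          (-1 : ℂ) ^ (2 * t + u) * ψ' (γ ^ (2 * t + u)) := by
        conv_lhs => rw [← hd]
        exact DH.sum_range_mul' 2 ((r-1)/2) (fun m => (-1 : ℂ) ^ m * ψ' (γ ^ m))
    _ = DH.G r ψ' γ 1 - DH.G r ψ' γ γ := by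
        unfold DH.G
        rw [← Finset.sum_sub_distrib]
        apply Finset.sum_congr rfl
        intro t _
        rw [Finset.sum_range_succ, Finset.sum_range_one]
        have e0 : γ ^ (2 * t + 0) = 1 * (γ ^ 2) ^ t := by rw [← pow_mul]; ring
        have e1 : γ ^ (2 * t + 1) = γ * (γ ^ 2) ^ t := by rw [← pow_mul]; ring
        have m0 : (-1 : ℂ) ^ (2 * t + 0) = 1 := by rw [pow_add, pow_mul]; norm_num
        have m1 : (-1 : ℂ) ^ (2 * t + 1) = -1 := by rw [pow_add, pow_mul]; norm_num
        rw [e0, e1, m0, m1]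
        ring

lemma DH.G_mul (hord : orderOf γ = r - 1) (hodd : r % 2 = 1) (hr : 2 < r) (hψ' : ψ' ≠ 1) :
    DH.G r ψ' γ 1 * DH.G r ψ' γ γ
      = (1 - ((quadraticChar (ZMod r) (-1) : ℤ) : ℂ) * r) / 4 := by
  set χ := (quadraticChar (ZMod r)).ringHomComp (Int.castRingHom ℂ) with hχ
  have hχ1 : χ ≠ 1 := by
    intro h
    have hu : IsUnit γ := DH.isUnit_of_orderOf hord hr
    have h1 : χ γ = 1 := by
      rw [h]
      exact MulChar.one_apply_coe hu.unit
    have h2 : χ γ = -1 := by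
      rw [hχ, MulChar.ringHomComp_apply, DH.chi_gen hord hodd hr]; simp
    rw [h1] at h2
    norm_num at h2
  have hχ2 : χ.IsQuadratic := (quadraticChar_isQuadratic (ZMod r)).comp _
  have hprim : ψ'.IsPrimitive := AddChar.IsPrimitive.of_ne_one hψ'
  have hsq := gaussSum_sq hχ1 hχ2 hprim
  rw [DH.G_sub ψ' hord hodd hr hψ'] at hsq
  have hadd := DH.G_one_add ψ' hord hodd hr hψ'
  have hcard : (Fintype.card (ZMod r) : ℂ) = (r : ℂ) := by rw [ZMod.card]
  have hneg : χ (-1) = ((quadraticChar (ZMod r) (-1) : ℤ) : ℂ) := by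
    rw [hχ, MulChar.ringHomComp_apply]; rfl
  rw [hcard, hneg] at hsq
  linear_combination (-(1:ℂ)/4) * hsq
    + ((DH.G r ψ' γ 1 + DH.G r ψ' γ γ - 1)/4) * hadd

lemma DH.G_prod (hord : orderOf γ = r - 1) (hodd : r % 2 = 1) (hr : 2 < r) (F : ℂ → ℂ) :
    ∏ v ∈ Finset.univ.erase 0, F (DH.G r ψ' γ (v * γ))
      = (F (DH.G r ψ' γ γ) * F (DH.G r ψ' γ 1)) ^ ((r - 1) / 2) := by
  have hd : 2 * ((r - 1) / 2) = r - 1 := by omega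
  have key : ∀ v : ℕ, F (DH.G r ψ' γ (γ ^ (2*v+0) * γ)) * F (DH.G r ψ' γ (γ ^ (2*v+1) * γ))
      = F (DH.G r ψ' γ γ) * F (DH.G r ψ' γ 1) := by
    intro v
    have e0 : γ ^ (2*v+0) * γ = γ * (γ ^ 2) ^ v := by rw [← pow_mul]; ring
    have e1 : γ ^ (2*v+1) * γ = 1 * (γ ^ 2) ^ (v+1) := by rw [← pow_mul]; ring
    rw [e0, e1, DH.G_shift ψ' hord hodd hr γ v, DH.G_shift ψ' hord hodd hr 1 (v+1)]
  calc ∏ v ∈ Finset.univ.erase 0, F (DH.G r ψ' γ (v * γ))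
      = ∏ m ∈ Finset.range (r - 1), F (DH.G r ψ' γ (γ ^ m * γ)) := by
        rw [← DH.image_pow_eq hord hr,
          Finset.prod_image (fun a ha b hb hab => DH.pow_injOn hord ha hb hab)]
    _ = ∏ v ∈ Finset.range ((r-1)/2), ∏ u ∈ Finset.range 2,
          F (DH.G r ψ' γ (γ ^ (2 * v + u) * γ)) := by
        conv_lhs => rw [← hd]
        exact DH.prod_range_mul' 2 ((r-1)/2) (fun m => F (DH.G r ψ' γ (γ ^ m * γ)))
    _ = ∏ _v ∈ Finset.range ((r-1)/2), (F (DH.G r ψ' γ γ) * F (DH.G r ψ' γ 1)) := by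
        apply Finset.prod_congr rfl
        intro v _
        rw [Finset.prod_range_succ, Finset.prod_range_one]
        exact key v
    _ = (F (DH.G r ψ' γ γ) * F (DH.G r ψ' γ 1)) ^ ((r - 1) / 2) := by
        rw [Finset.prod_const, Finset.card_range]

end Gauss

section PQ

lemma DH.pow_modEq {r : ℕ} [Fact r.Prime] {γ : ZMod r} (hord : orderOf γ = r - 1)
    (hr : 2 < r) {m n : ℕ} (h : γ ^ m = γ ^ n) : m ≡ n [MOD r - 1] := by
  have hu : IsUnit γ := DH.isUnit_of_orderOf hord hr
  have h2 : hu.unit ^ m = hu.unit ^ n := by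
    apply Units.ext
    simpa [Units.val_pow_eq_pow_val, hu.unit_spec] using h
  have h3 := pow_eq_pow_iff_modEq.mp h2
  have h4 : orderOf hu.unit = r - 1 := by
    rw [← hord, ← orderOf_units, hu.unit_spec]
  rwa [h4] at h3

lemma DH.image_Icc_cast {r : ℕ} [Fact r.Prime] :
    (Finset.Icc 1 (r - 1)).image (fun m : ℕ => (m : ZMod r)) = Finset.univ.erase 0 := by
  have hr : 2 ≤ r := (Fact.out : r.Prime).two_le
  have hinj : Set.InjOn (fun m : ℕ => (m : ZMod r)) (Finset.Icc 1 (r - 1)) := by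
    intro a ha b hb hab
    simp only [Finset.coe_Icc, Set.mem_Icc] at ha hb
    have h1 : (a : ZMod r).val = a := ZMod.val_cast_of_lt (by omega)
    have h2 : (b : ZMod r).val = b := ZMod.val_cast_of_lt (by omega)
    have := congrArg ZMod.val hab
    simpa only [h1, h2] using this
  apply Finset.eq_of_subset_of_card_le
  · intro s hs
    simp only [Finset.mem_image] at hs
    obtain ⟨m, hm, rfl⟩ := hs
    simp only [Finset.mem_Icc] at hm
    refine Finset.mem_erase.mpr ⟨?_, Finset.mem_univ _⟩
    intro h0
    have : (m : ZMod r).val = m := ZMod.val_cast_of_lt (by omega)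
    rw [h0] at this
    simp only [ZMod.val_zero] at this
    omega
  · rw [Finset.card_erase_of_mem (Finset.mem_univ _), Finset.card_univ, ZMod.card,
      Finset.card_image_of_injOn hinj, Nat.card_Icc]
    omega

lemma DH.Icc_sum_cast {r : ℕ} [Fact r.Prime] (ψ' : AddChar (ZMod r) ℂ) (hψ' : ψ' ≠ 1)
    (c : ZMod r) :
    ∑ m ∈ Finset.Icc 1 (r - 1), ψ' ((m : ZMod r) * c)
      = if c = 0 then ((r : ℂ) - 1) else -1 := by
  have hr : 2 ≤ r := (Fact.out : r.Prime).two_le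
  have hinj : ∀ a ∈ Finset.Icc 1 (r-1), ∀ b ∈ Finset.Icc 1 (r-1),
      (a : ZMod r) = (b : ZMod r) → a = b := by
    intro a ha b hb hab
    simp only [Finset.mem_Icc] at ha hb
    have h1 : (a : ZMod r).val = a := ZMod.val_cast_of_lt (by omega)
    have h2 : (b : ZMod r).val = b := ZMod.val_cast_of_lt (by omega)
    rw [← h1, ← h2, hab]
  have himg : ∑ m ∈ Finset.Icc 1 (r - 1), ψ' ((m : ZMod r) * c)
      = ∑ z ∈ Finset.univ.erase 0, ψ' (z * c) := by
    rw [← DH.image_Icc_cast, Finset.sum_image hinj]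
  rw [himg]
  split_ifs with hc
  · subst hc
    simp only [mul_zero, AddChar.map_zero_eq_one, Finset.sum_const, nsmul_eq_mul, mul_one]
    rw [Finset.card_erase_of_mem (Finset.mem_univ _), Finset.card_univ, ZMod.card]
    push_cast [Nat.cast_sub (by omega : (1:ℕ) ≤ r)]
    ring
  · exact DH.sum_erase_mul ψ' hψ' hc

lemma DH.D0_inj (p q g x : ℕ) [Fact p.Prime] [Fact q.Prime]
    (hpp : 2 < p) (hqq : 2 < q) (hpodd : p % 2 = 1) (hqodd : q % 2 = 1)
    (hgcd : Nat.gcd (p - 1) (q - 1) = 2)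
    (hgp : orderOf (g : ZMod p) = p - 1) (hgq : orderOf (g : ZMod q) = q - 1)
    (hxp : (x : ZMod p) = (g : ZMod p)) (hxq : (x : ZMod q) = 1) :
    ∀ a ∈ Finset.range ((p-1)*(q-1)/4) ×ˢ Finset.range 2,
    ∀ b ∈ Finset.range ((p-1)*(q-1)/4) ×ˢ Finset.range 2,
    ((g : ZMod (p*q)) ^ (2 * a.1) * (x : ZMod (p*q)) ^ a.2
      = (g : ZMod (p*q)) ^ (2 * b.1) * (x : ZMod (p*q)) ^ b.2) → a = b := by
  have hcop2 : Nat.Coprime ((p-1)/2) ((q-1)/2) := by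
    have h1 : 2 * ((p-1)/2) = p - 1 := by omega
    have h2 : 2 * ((q-1)/2) = q - 1 := by omega
    have := hgcd
    rw [← h1, ← h2, Nat.gcd_mul_left] at this
    unfold Nat.Coprime
    omega
  have hPQ : (p-1)*(q-1)/4 = ((p-1)/2) * ((q-1)/2) := by
    have h1 : 2 * ((p-1)/2) = p - 1 := by omega
    have h2 : 2 * ((q-1)/2) = q - 1 := by omega
    have h3 : (p-1)*(q-1) = 4 * (((p-1)/2) * ((q-1)/2)) := by
      calc (p-1)*(q-1) = (2*((p-1)/2)) * (2*((q-1)/2)) := by rw [h1, h2]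
        _ = 4 * (((p-1)/2) * ((q-1)/2)) := by ring
    omega
  rintro ⟨t, i⟩ hti ⟨t', i'⟩ hti' h
  simp only [Finset.mem_product, Finset.mem_range] at hti hti'
  -- reduce mod q
  have hq' : (ZMod.castHom (dvd_mul_left q p) (ZMod q)) ((g : ZMod (p*q)) ^ (2*t) * (x : ZMod (p*q)) ^ i)
      = (ZMod.castHom (dvd_mul_left q p) (ZMod q)) ((g : ZMod (p*q)) ^ (2*t') * (x : ZMod (p*q)) ^ i') := by rw [h]
  simp only [map_mul, map_pow, map_natCast, hxq, one_pow, mul_one] at hq'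
  have hmodq : 2 * t ≡ 2 * t' [MOD q - 1] := DH.pow_modEq hgq hqq hq'
  have htq : t ≡ t' [MOD (q-1)/2] := by
    have h2 : Nat.gcd (q-1) 2 = 2 := by
      rw [Nat.gcd_comm]; exact Nat.gcd_eq_left (by omega)
    have := Nat.ModEq.cancel_left_div_gcd (by omega : 0 < q - 1) hmodq
    rwa [h2] at this
  -- reduce mod p
  have hp' : (ZMod.castHom (dvd_mul_right p q) (ZMod p)) ((g : ZMod (p*q)) ^ (2*t) * (x : ZMod (p*q)) ^ i)
      = (ZMod.castHom (dvd_mul_right p q) (ZMod p)) ((g : ZMod (p*q)) ^ (2*t') * (x : ZMod (p*q)) ^ i') := by rw [h]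
  simp only [map_mul, map_pow, map_natCast, hxp, ← pow_add] at hp'
  have hmodp : 2 * t + i ≡ 2 * t' + i' [MOD p - 1] := DH.pow_modEq hgp hpp hp'
  have hmod2 : (2 * t + i) % 2 = (2 * t' + i') % 2 := by
    have := Nat.ModEq.of_dvd (by omega : (2:ℕ) ∣ p - 1) hmodp
    exact this
  have hii : i = i' := by omega
  subst hii
  have hmodp2 : 2 * t ≡ 2 * t' [MOD p - 1] := by
    have := Nat.ModEq.add_right_cancel' i hmodp
    exact this
  have htp : t ≡ t' [MOD (p-1)/2] := by
    have h2 : Nat.gcd (p-1) 2 = 2 := by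
      rw [Nat.gcd_comm]; exact Nat.gcd_eq_left (by omega)
    have := Nat.ModEq.cancel_left_div_gcd (by omega : 0 < p - 1) hmodp2
    rwa [h2] at this
  have htt : t ≡ t' [MOD ((p-1)/2) * ((q-1)/2)] :=
    (Nat.modEq_and_modEq_iff_modEq_mul hcop2).mp ⟨htp, htq⟩
  have ht : t = t' := by
    have h1 : t % (((p-1)/2) * ((q-1)/2)) = t' % (((p-1)/2) * ((q-1)/2)) := htt
    rw [Nat.mod_eq_of_lt (by omega : t < ((p-1)/2) * ((q-1)/2)),
      Nat.mod_eq_of_lt (by omega : t' < ((p-1)/2) * ((q-1)/2))] at h1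
    exact h1
  simp [ht]

end PQ

section PQ2

lemma DH.D1_sum (p q g x : ℕ) [Fact p.Prime] [Fact q.Prime]
    (hpp : 2 < p) (hqq : 2 < q) (hpodd : p % 2 = 1) (hqodd : q % 2 = 1)
    (hgcd : Nat.gcd (p - 1) (q - 1) = 2)
    (hgp : orderOf (g : ZMod p) = p - 1) (hgq : orderOf (g : ZMod q) = q - 1)
    (hxp : (x : ZMod p) = (g : ZMod p)) (hxq : (x : ZMod q) = 1)
    (hgN : IsUnit (g : ZMod (p * q)))
    (ψ : AddChar (ZMod (p*q)) ℂ) (ψp : AddChar (ZMod p) ℂ) (ψq : AddChar (ZMod q) ℂ)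
    (hfact : ∀ z : ZMod (p*q), ψ z
      = ψp (ZMod.castHom (dvd_mul_right p q) (ZMod p) z)
        * ψq (ZMod.castHom (dvd_mul_left q p) (ZMod q) z))
    (k : ZMod (p*q)) :
    ∑ a ∈ DHD1 p q g x, ψ (a * k)
      = (∑ m ∈ Finset.range (p - 1),
            ψp (ZMod.castHom (dvd_mul_right p q) (ZMod p) k * (g : ZMod p) ^ (m+1)))
        * DH.G q ψq (g : ZMod q)
            (ZMod.castHom (dvd_mul_left q p) (ZMod q) k * (g : ZMod q)) := by
  set φp := ZMod.castHom (dvd_mul_right p q) (ZMod p) with hφp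
  set φq := ZMod.castHom (dvd_mul_left q p) (ZMod q) with hφq
  set gp : ZMod p := (g : ZMod p) with hgpdef
  set gq : ZMod q := (g : ZMod q) with hgqdef
  set cp : ZMod p := φp k with hcp
  set cq : ZMod q := φq k with hcq
  have hP2 : 2 * ((p-1)/2) = p - 1 := by omega
  have hQ2 : 2 * ((q-1)/2) = q - 1 := by omega
  have hPQ : (p-1)*(q-1)/4 = ((p-1)/2) * ((q-1)/2) := by
    have h3 : (p-1)*(q-1) = 4 * (((p-1)/2) * ((q-1)/2)) := by
      calc (p-1)*(q-1) = (2*((p-1)/2)) * (2*((q-1)/2)) := by rw [hP2, hQ2]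
        _ = 4 * (((p-1)/2) * ((q-1)/2)) := by ring
    omega
  have hcop2 : Nat.Coprime ((p-1)/2) ((q-1)/2) := by
    have := hgcd
    rw [← hP2, ← hQ2, Nat.gcd_mul_left] at this
    unfold Nat.Coprime
    omega
  -- pointwise factorization
  have hterm : ∀ t i : ℕ,
      ψ ((g : ZMod (p*q)) * ((g : ZMod (p*q)) ^ (2*t) * (x : ZMod (p*q)) ^ i) * k)
        = ψp (cp * gp ^ (2*t+1+i)) * ψq (cq * gq ^ (2*t+1)) := by
    intro t i
    rw [hfact]
    congr 1
    · congr 1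
      simp only [map_mul, map_pow, map_natCast, ← hφp, ← hgpdef, hxp, ← hcp]
      ring
    · congr 1
      simp only [map_mul, map_pow, map_natCast, ← hφq, ← hgqdef, hxq, ← hcq, one_pow]
      ring
  -- unfold images
  have hsum1 : ∑ a ∈ DHD1 p q g x, ψ (a * k)
      = ∑ t ∈ Finset.range ((p-1)*(q-1)/4), ∑ i ∈ Finset.range 2,
          ψp (cp * gp ^ (2*t+1+i)) * ψq (cq * gq ^ (2*t+1)) := by
    rw [DHD1, Finset.sum_image (fun a _ b _ h => hgN.mul_right_injective h), DHD0,
      Finset.sum_image (DH.D0_inj p q g x hpp hqq hpodd hqodd hgcd hgp hgq hxp hxq),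
      Finset.sum_product]
    exact Finset.sum_congr rfl fun t _ => Finset.sum_congr rfl fun i _ => hterm t i
  rw [hsum1, Finset.sum_comm, hPQ]
  have hgp1 : (gp ^ 2) ^ ((p-1)/2) = 1 := by
    rw [← pow_mul, hP2, ← hgp]
    exact pow_orderOf_eq_one gp
  have hinner : ∀ i : ℕ,
      ∑ t ∈ Finset.range (((p-1)/2) * ((q-1)/2)),
          ψp (cp * gp ^ (2*t+1+i)) * ψq (cq * gq ^ (2*t+1))
        = (∑ u ∈ Finset.range ((p-1)/2), ψp (cp * gp ^ (2*u+1+i)))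
          * DH.G q ψq gq (cq * gq) := by
    intro i
    rw [DH.sum_range_mul' ((p-1)/2) ((q-1)/2)
      (fun t => ψp (cp * gp ^ (2*t+1+i)) * ψq (cq * gq ^ (2*t+1)))]
    have hstep : ∀ v u : ℕ,
        ψp (cp * gp ^ (2*((p-1)/2*v+u)+1+i)) * ψq (cq * gq ^ (2*((p-1)/2*v+u)+1))
          = ψp (cp * gp ^ (2*u+1+i)) * ψq ((cq * gq) * (gq^2) ^ ((p-1)/2*v+u)) := by
      intro v u
      congr 2
      · congr 1
        have : gp ^ (2*((p-1)/2*v+u)+1+i)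
            = gp ^ (2*u+1+i) * ((gp ^ 2) ^ ((p-1)/2)) ^ v := by
          rw [← pow_mul, ← pow_mul, ← pow_add]
          congr 1
          ring
        rw [this, hgp1, one_pow, mul_one]
      · rw [← pow_mul, mul_assoc, ← pow_succ']
    calc ∑ v ∈ Finset.range ((q-1)/2), ∑ u ∈ Finset.range ((p-1)/2),
            ψp (cp * gp ^ (2*((p-1)/2*v+u)+1+i)) * ψq (cq * gq ^ (2*((p-1)/2*v+u)+1))
        = ∑ u ∈ Finset.range ((p-1)/2), ∑ v ∈ Finset.range ((q-1)/2),
            ψp (cp * gp ^ (2*u+1+i)) * ψq ((cq * gq) * (gq^2) ^ ((p-1)/2*v+u)) := by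
          rw [Finset.sum_comm]
          exact Finset.sum_congr rfl fun u _ => Finset.sum_congr rfl fun v _ => hstep v u
      _ = ∑ u ∈ Finset.range ((p-1)/2), ψp (cp * gp ^ (2*u+1+i))
            * ∑ v ∈ Finset.range ((q-1)/2), ψq ((cq * gq) * (gq^2) ^ ((p-1)/2*v+u)) := by
          exact Finset.sum_congr rfl fun u _ => by rw [Finset.mul_sum]
      _ = ∑ u ∈ Finset.range ((p-1)/2), ψp (cp * gp ^ (2*u+1+i))
            * DH.G q ψq gq (cq * gq) := by
          apply Finset.sum_congr rfl
          intro u _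
          congr 1
          have := DH.sum_orderOf_affine (gq ^ 2) (DH.ord2 hgq hqodd) (by omega)
            (by rwa [Nat.coprime_comm] at hcop2) u (fun w => ψq ((cq * gq) * w))
          exact this
      _ = (∑ u ∈ Finset.range ((p-1)/2), ψp (cp * gp ^ (2*u+1+i)))
            * DH.G q ψq gq (cq * gq) := by rw [Finset.sum_mul]
  rw [Finset.sum_congr rfl (fun i _ => hinner i), ← Finset.sum_mul]
  congr 1
  -- ∑_{i<2} ∑_{u<P₁} ψp (cp·gp^(2u+1+i)) = ∑_{m<p-1} ψp (cp·gp^(m+1))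
  rw [Finset.sum_comm]
  calc ∑ u ∈ Finset.range ((p-1)/2), ∑ i ∈ Finset.range 2, ψp (cp * gp ^ (2*u+1+i))
      = ∑ u ∈ Finset.range ((p-1)/2), ∑ i ∈ Finset.range 2, ψp (cp * gp ^ ((2*u+i)+1)) := by
        apply Finset.sum_congr rfl
        intro u _
        apply Finset.sum_congr rfl
        intro i _
        congr 2
        ring
    _ = ∑ m ∈ Finset.range (2 * ((p-1)/2)), ψp (cp * gp ^ (m+1)) :=
        (DH.sum_range_mul' 2 ((p-1)/2) (fun m => ψp (cp * gp ^ (m+1)))).symm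
    _ = ∑ m ∈ Finset.range (p-1), ψp (cp * gp ^ (m+1)) := by rw [hP2]

lemma DH.P_sum (p q : ℕ) [Fact p.Prime] [Fact q.Prime] (hpq : p < q)
    (ψ : AddChar (ZMod (p*q)) ℂ) (ψp : AddChar (ZMod p) ℂ) (ψq : AddChar (ZMod q) ℂ)
    (hψq : ψq ≠ 1)
    (hfact : ∀ z : ZMod (p*q), ψ z
      = ψp (ZMod.castHom (dvd_mul_right p q) (ZMod p) z)
        * ψq (ZMod.castHom (dvd_mul_left q p) (ZMod q) z))
    (k : ZMod (p*q)) :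
    ∑ a ∈ DHP p q, ψ (a * k)
      = if ZMod.castHom (dvd_mul_left q p) (ZMod q) k = 0 then ((q : ℂ) - 1) else -1 := by
  have hq2 : 2 ≤ q := (Fact.out : q.Prime).two_le
  have hp0 : 0 < p := (Fact.out : p.Prime).pos
  set φq := ZMod.castHom (dvd_mul_left q p) (ZMod q) with hφq
  set cq := φq k with hcq
  set c : ZMod q := (p : ZMod q) * cq with hc
  have hinj : ∀ a ∈ Finset.Icc 1 (q-1), ∀ b ∈ Finset.Icc 1 (q-1),
      ((a*p : ℕ) : ZMod (p*q)) = ((b*p : ℕ) : ZMod (p*q)) → a = b := by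
    intro a ha b hb hab
    simp only [Finset.mem_Icc] at ha hb
    have hlt : ∀ m : ℕ, m ≤ q - 1 → m * p < p * q := by
      intro m hm
      calc m * p ≤ (q-1) * p := Nat.mul_le_mul_right p hm
        _ < q * p := (Nat.mul_lt_mul_right hp0).mpr (by omega)
        _ = p * q := Nat.mul_comm q p
    have hva : ((a*p:ℕ) : ZMod (p*q)).val = a*p := ZMod.val_cast_of_lt (hlt a ha.2)
    have hvb : ((b*p:ℕ) : ZMod (p*q)).val = b*p := ZMod.val_cast_of_lt (hlt b hb.2)
    have : a * p = b * p := by rw [← hva, ← hvb, hab]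
    exact Nat.eq_of_mul_eq_mul_right hp0 this
  rw [DHP, Finset.sum_image hinj]
  have hpt : ∀ m : ℕ, ψ (((m*p : ℕ) : ZMod (p*q)) * k) = ψq ((m : ZMod q) * c) := by
    intro m
    rw [hfact]
    have h1 : (ZMod.castHom (dvd_mul_right p q) (ZMod p)) (((m*p:ℕ) : ZMod (p*q)) * k) = 0 := by
      rw [map_mul, map_natCast]
      push_cast
      simp [ZMod.natCast_self]
    rw [h1, AddChar.map_zero_eq_one, one_mul]
    congr 1
    rw [map_mul, map_natCast, hc, hcq]
    push_cast
    ring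
  rw [Finset.sum_congr rfl (fun m _ => hpt m), DH.Icc_sum_cast ψq hψq c]
  have hpne : (p : ZMod q) ≠ 0 := by
    intro h
    rw [ZMod.natCast_eq_zero_iff] at h
    have := Nat.le_of_dvd hp0 h
    omega
  have hiff : c = 0 ↔ cq = 0 := by
    rw [hc]
    constructor
    · intro h
      rcases mul_eq_zero.mp h with h' | h'
      · exact absurd h' hpne
      · exact h'
    · intro h
      rw [h, mul_zero]
  by_cases h0 : cq = 0
  · rw [if_pos (hiff.mpr h0), if_pos h0]
  · rw [if_neg (fun hcc => h0 (hiff.mp hcc)), if_neg h0]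

end PQ2


theorem stmt0 (p q g x : ℕ) (hp : Nat.Prime p) (hq : Nat.Prime q)
    (hpo : Odd p) (hqo : Odd q) (hpq : p < q)
    (hgcd : Nat.gcd (p - 1) (q - 1) = 2)
    (hgp : orderOf (g : ZMod p) = p - 1) (hgq : orderOf (g : ZMod q) = q - 1)
    (hxp : (x : ZMod p) = (g : ZMod p)) (hxq : (x : ZMod q) = 1) :
    (q % 4 = 1 → (DHA1 p q g x).det =
      ((p : ℂ) + 1) * (((q : ℂ) - 1) / 2) ^ p *
        (((p : ℂ) - 1) ^ 2 * ((q : ℂ) - 1) / 4 - (p : ℂ)) ^ ((q - 1) / 2) *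
        (((q : ℂ) - 1) / 4) ^ ((p - 1) * (q - 1) / 2)) ∧
    (q % 4 = 3 → (DHA1 p q g x).det =
      ((p : ℂ) + 1) * (((q : ℂ) - 1) / 2) ^ p *
        (((p : ℂ) - 1) ^ 2 * ((q : ℂ) + 1) / 4 + (p : ℂ)) ^ ((q - 1) / 2) *
        (((q : ℂ) + 1) / 4) ^ ((p - 1) * (q - 1) / 2)) := by
  haveI hfp : Fact p.Prime := ⟨hp⟩
  haveI hfq : Fact q.Prime := ⟨hq⟩
  have hpodd : p % 2 = 1 := Nat.odd_iff.mp hpo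
  have hqodd : q % 2 = 1 := Nat.odd_iff.mp hqo
  have hpp : 2 < p := by have := hp.two_le; omega
  have hqq : 2 < q := by have := hq.two_le; omega
  haveI : NeZero (p * q) := ⟨by positivity⟩
  have hco : Nat.Coprime p q := (Nat.coprime_primes hp hq).mpr (ne_of_lt hpq)
  -- the additive character on ZMod (p*q)
  have hprim : IsPrimitiveRoot (Complex.exp (2 * Real.pi * Complex.I / ((p*q : ℕ) : ℂ))) (p*q) :=
    Complex.isPrimitiveRoot_exp (p*q) (NeZero.ne _)
  set ψ : AddChar (ZMod (p*q)) ℂ := AddChar.zmodChar (p*q) hprim.pow_eq_one with hψdef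
  have hψinj : Function.Injective ψ := by
    intro a b hab
    rw [hψdef, AddChar.zmodChar_apply, AddChar.zmodChar_apply] at hab
    exact ZMod.val_injective _ (hprim.pow_inj a.val_lt b.val_lt hab)
  set crt := ZMod.chineseRemainder hco with hcrtdef
  set φp := ZMod.castHom (dvd_mul_right p q) (ZMod p) with hφp
  set φq := ZMod.castHom (dvd_mul_left q p) (ZMod q) with hφq
  have hcrteq : ∀ z : ZMod (p*q), crt z = (φp z, φq z) := by
    intro z
    have h1 : crt z
        = ZMod.castHom (show Nat.lcm p q ∣ p * q by simp [Nat.lcm_dvd_iff])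
            (ZMod p × ZMod q) z := rfl
    rw [h1]
    ext <;> simp [ZMod.castHom_apply, ← ZMod.natCast_val, hφp, hφq]
  set ψp : AddChar (ZMod p) ℂ := ψ.compAddMonoidHom
    ((crt.symm : ZMod p × ZMod q ≃+* ZMod (p*q)).toRingHom.toAddMonoidHom.comp
      (AddMonoidHom.inl (ZMod p) (ZMod q))) with hψpdef
  set ψq : AddChar (ZMod q) ℂ := ψ.compAddMonoidHom
    ((crt.symm : ZMod p × ZMod q ≃+* ZMod (p*q)).toRingHom.toAddMonoidHom.comp
      (AddMonoidHom.inr (ZMod p) (ZMod q))) with hψqdef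
  have hψp_apply : ∀ u : ZMod p, ψp u = ψ (crt.symm (u, 0)) := fun u => rfl
  have hψq_apply : ∀ v : ZMod q, ψq v = ψ (crt.symm (0, v)) := fun v => rfl
  have hfact : ∀ z : ZMod (p*q), ψ z = ψp (φp z) * ψq (φq z) := by
    intro z
    rw [hψp_apply, hψq_apply, ← AddChar.map_add_eq_mul, ← map_add]
    have h2 : ((φp z, 0) + (0, φq z) : ZMod p × ZMod q) = (φp z, φq z) := by simp
    rw [h2, ← hcrteq z, RingEquiv.symm_apply_apply]
  have hψpne : ψp ≠ 1 := by
    intro h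
    have h1 : ψp 1 = ψp 0 := by rw [h]; simp
    rw [hψp_apply, hψp_apply] at h1
    have h2 : ((1 : ZMod p), (0 : ZMod q)) = (0, 0) := by
      have := crt.symm.injective (hψinj h1)
      exact this
    have : (1 : ZMod p) = 0 := congrArg Prod.fst h2
    exact one_ne_zero this
  have hψqne : ψq ≠ 1 := by
    intro h
    have h1 : ψq 1 = ψq 0 := by rw [h]; simp
    rw [hψq_apply, hψq_apply] at h1
    have h2 : ((0 : ZMod p), (1 : ZMod q)) = (0, 0) := crt.symm.injective (hψinj h1)
    have : (1 : ZMod q) = 0 := congrArg Prod.snd h2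
    exact one_ne_zero this
  -- g is a unit mod p*q
  have hup : IsUnit (g : ZMod p) := DH.isUnit_of_orderOf hgp hpp
  have huq : IsUnit (g : ZMod q) := DH.isUnit_of_orderOf hgq hqq
  have hgN : IsUnit (g : ZMod (p*q)) := by
    rw [ZMod.isUnit_iff_coprime]
    exact Nat.Coprime.mul_right ((ZMod.isUnit_iff_coprime g p).mp hup)
      ((ZMod.isUnit_iff_coprime g q).mp huq)
  -- determinant as product of character sums
  have hdet : (DHA1 p q g x).det
      = ∏ k : ZMod (p*q), ∑ z : ZMod (p*q), ((DHs1 p q g x z.val : ℕ) : ℂ) * ψ (z * k) :=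
    DH.det_circulant (fun m => ((DHs1 p q g x m : ℕ) : ℂ)) ψ hψinj
  -- disjointness of D1 and P
  have hdisj : Disjoint (DHD1 p q g x) (DHP p q) := by
    rw [Finset.disjoint_left]
    intro a h1 h2
    have hu1 : φp a ≠ 0 := by
      rw [DHD1, Finset.mem_image] at h1
      obtain ⟨d, hd, rfl⟩ := h1
      rw [DHD0, Finset.mem_image] at hd
      obtain ⟨ti, _, rfl⟩ := hd
      simp only [map_mul, map_pow, map_natCast, hxp]
      exact (hup.mul ((hup.pow _).mul (hup.pow _))).ne_zero
    have hu2 : φp a = 0 := by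
      rw [DHP, Finset.mem_image] at h2
      obtain ⟨m, _, rfl⟩ := h2
      rw [map_natCast]
      push_cast
      simp [ZMod.natCast_self]
    exact hu1 hu2
  -- the eigenvalue formula
  have hlam : ∀ k : ZMod (p*q),
      ∑ z : ZMod (p*q), ((DHs1 p q g x z.val : ℕ) : ℂ) * ψ (z * k)
        = (if φp k = 0 then ((p:ℂ)-1) else -1) * DH.G q ψq (g : ZMod q) (φq k * (g : ZMod q))
          + (if φq k = 0 then ((q:ℂ)-1) else -1) := by
    intro k
    have h1 : ∑ z : ZMod (p*q), ((DHs1 p q g x z.val : ℕ) : ℂ) * ψ (z * k)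
        = ∑ z ∈ DHD1 p q g x ∪ DHP p q, ψ (z * k) := by
      rw [← Finset.univ_inter (DHD1 p q g x ∪ DHP p q), ← Finset.sum_ite_mem]
      apply Finset.sum_congr rfl
      intro z _
      rw [DHs1, ZMod.natCast_zmod_val]
      split_ifs <;> simp
    rw [h1, Finset.sum_union hdisj,
      DH.D1_sum p q g x hpp hqq hpodd hqodd hgcd hgp hgq hxp hxq hgN ψ ψp ψq hfact k,
      DH.P_sum p q hpq ψ ψp ψq hψqne hfact k,
      DH.FP_eval hgp hpp ψp hψpne (φp k)]
  -- transfer the product over the CRT equivalence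
  set A := DH.G q ψq (g : ZMod q) 1 with hA
  set B := DH.G q ψq (g : ZMod q) ((g : ZMod q)) with hB
  set Q1 : ℕ := (q-1)/2 with hQ1
  set Lam : ZMod p × ZMod q → ℂ := fun w =>
    (if w.1 = 0 then ((p:ℂ)-1) else -1) * DH.G q ψq (g : ZMod q) (w.2 * (g : ZMod q))
      + (if w.2 = 0 then ((q:ℂ)-1) else -1) with hLam
  have hprodLam : (DHA1 p q g x).det = ∏ w : ZMod p × ZMod q, Lam w := by
    rw [hdet]
    refine Fintype.prod_equiv crt.toEquiv _ Lam ?_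
    intro k
    rw [hlam k]
    have : crt.toEquiv k = (φp k, φq k) := hcrteq k
    rw [this]
  have hG0 : DH.G q ψq (g : ZMod q) ((0 : ZMod q) * (g : ZMod q)) = ((Q1 : ℕ) : ℂ) := by
    rw [zero_mul, DH.G_zero]
  -- row products
  have hrow0 : ∏ v : ZMod q, Lam (0, v)
      = (((p:ℂ)-1) * ((Q1 : ℕ) : ℂ) + ((q:ℂ)-1))
        * ((((p:ℂ)-1) * B + (-1)) * (((p:ℂ)-1) * A + (-1))) ^ Q1 := by
    rw [← Finset.mul_prod_erase Finset.univ _ (Finset.mem_univ 0)]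
    congr 1
    · simp only [hLam, hG0]
      norm_num
    · calc ∏ v ∈ Finset.univ.erase 0, Lam (0, v)
          = ∏ v ∈ Finset.univ.erase 0,
              (((p:ℂ)-1) * DH.G q ψq (g : ZMod q) (v * (g : ZMod q)) + (-1)) := by
            apply Finset.prod_congr rfl
            intro v hv
            simp only [hLam, if_neg (Finset.mem_erase.mp hv).1]
            norm_num
        _ = ((((p:ℂ)-1) * B + (-1)) * (((p:ℂ)-1) * A + (-1))) ^ Q1 :=
            DH.G_prod ψq hgq hqodd hqq (fun z => ((p:ℂ)-1) * z + (-1))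
  have hrowu : ∀ u : ZMod p, u ≠ 0 → ∏ v : ZMod q, Lam (u, v)
      = ((-1) * ((Q1 : ℕ) : ℂ) + ((q:ℂ)-1))
        * (((-1) * B + (-1)) * ((-1) * A + (-1))) ^ Q1 := by
    intro u hu
    rw [← Finset.mul_prod_erase Finset.univ _ (Finset.mem_univ 0)]
    congr 1
    · simp only [hLam, if_neg hu, hG0]
      norm_num
    · calc ∏ v ∈ Finset.univ.erase 0, Lam (u, v)
          = ∏ v ∈ Finset.univ.erase 0,
              ((-1) * DH.G q ψq (g : ZMod q) (v * (g : ZMod q)) + (-1)) := by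
            apply Finset.prod_congr rfl
            intro v hv
            simp only [hLam, if_neg hu, if_neg (Finset.mem_erase.mp hv).1]
        _ = (((-1) * B + (-1)) * ((-1) * A + (-1))) ^ Q1 :=
            DH.G_prod ψq hgq hqodd hqq (fun z => (-1) * z + (-1))
  set R0 : ℂ := (((p:ℂ)-1) * (Q1 : ℂ) + ((q:ℂ)-1))
    * ((((p:ℂ)-1) * B + (-1)) * (((p:ℂ)-1) * A + (-1))) ^ Q1 with hR0
  set R1 : ℂ := ((-1) * (Q1 : ℂ) + ((q:ℂ)-1))
    * (((-1) * B + (-1)) * ((-1) * A + (-1))) ^ Q1 with hR1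
  have hdetval : (DHA1 p q g x).det = R0 * R1 ^ (p - 1) := by
    rw [hprodLam, Fintype.prod_prod_type]
    rw [← Finset.mul_prod_erase Finset.univ _ (Finset.mem_univ (0 : ZMod p))]
    have h2 : ∏ u ∈ Finset.univ.erase 0, ∏ v : ZMod q, Lam (u, v) = R1 ^ (p-1) := by
      rw [Finset.prod_congr rfl (fun u hu => hrowu u (Finset.mem_erase.mp hu).1),
        Finset.prod_const, Finset.card_erase_of_mem (Finset.mem_univ _),
        Finset.card_univ, ZMod.card]
    rw [hrow0, h2]
  -- final arithmetic
  have hQ1c : ((Q1 : ℕ) : ℂ) = ((q:ℂ) - 1) / 2 := by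
    have h1 : (2 * Q1 : ℕ) = q - 1 := by omega
    have h2 : ((2 * Q1 : ℕ) : ℂ) = ((q : ℂ) - 1) := by
      rw [h1]
      push_cast [Nat.cast_sub (by omega : (1:ℕ) ≤ q)]
      ring
    push_cast at h2
    linear_combination h2 / 2
  have hABadd : A + B = -1 := DH.G_one_add ψq hgq hqodd hqq hψqne
  have hABmul : A * B = (1 - ((quadraticChar (ZMod q) (-1) : ℤ) : ℂ) * q) / 4 :=
    DH.G_mul ψq hgq hqodd hqq hψqne
  have hchar2 : ringChar (ZMod q) ≠ 2 := by rw [ZMod.ringChar_zmod_n]; omega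
  have hexp : (p - 1) * (q - 1) / 2 = Q1 * (p - 1) := by
    have h1 : (p-1) * (q-1) = 2 * (Q1 * (p-1)) := by
      calc (p-1)*(q-1) = (p-1)*(2*Q1) := by congr 1; omega
        _ = 2*(Q1*(p-1)) := by ring
    omega
  have hL0 : ((p:ℂ)-1) * ((Q1 : ℕ) : ℂ) + ((q:ℂ)-1) = ((p:ℂ)+1) * (((q:ℂ)-1)/2) := by
    rw [hQ1c]; ring
  have hL1 : (-1) * ((Q1 : ℕ) : ℂ) + ((q:ℂ)-1) = ((q:ℂ)-1)/2 := by rw [hQ1c]; ring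
  have hppow : (((q:ℂ)-1)/2) ^ p = (((q:ℂ)-1)/2) ^ (p - 1) * (((q:ℂ)-1)/2) := by
    conv_lhs => rw [show p = (p-1) + 1 by omega]
    rw [pow_succ]
  constructor
  · intro h4
    have hχ : ((quadraticChar (ZMod q) (-1) : ℤ) : ℂ) = 1 := by
      rw [quadraticChar_neg_one hchar2, ZMod.card, ZMod.χ₄_nat_one_mod_four h4]
      norm_num
    rw [hχ] at hABmul
    have hE1 : (((p:ℂ)-1) * B + (-1)) * (((p:ℂ)-1) * A + (-1))
        = -(((p:ℂ)-1)^2 * ((q:ℂ)-1)/4 - (p:ℂ)) := by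
      linear_combination (((p:ℂ)-1)^2) * hABmul - (((p:ℂ)-1)) * hABadd
    have hE2 : ((-1) * B + (-1)) * ((-1) * A + (-1)) = -(((q:ℂ)-1)/4) := by
      linear_combination hABmul + hABadd
    have hQ1even : Even Q1 := Nat.even_iff.mpr (by omega)
    rw [hdetval, hR0, hR1, hE1, hE2, Even.neg_pow hQ1even, Even.neg_pow hQ1even,
      hL0, hL1, hexp, mul_pow, ← pow_mul, hppow]
    ring
  · intro h4
    have hχ : ((quadraticChar (ZMod q) (-1) : ℤ) : ℂ) = -1 := by
      rw [quadraticChar_neg_one hchar2, ZMod.card, ZMod.χ₄_nat_three_mod_four h4]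
      norm_num
    rw [hχ] at hABmul
    have hE1 : (((p:ℂ)-1) * B + (-1)) * (((p:ℂ)-1) * A + (-1))
        = ((p:ℂ)-1)^2 * ((q:ℂ)+1)/4 + (p:ℂ) := by
      linear_combination (((p:ℂ)-1)^2) * hABmul - (((p:ℂ)-1)) * hABadd
    have hE2 : ((-1) * B + (-1)) * ((-1) * A + (-1)) = ((q:ℂ)+1)/4 := by
      linear_combination hABmul + hABadd
    rw [hdetval, hR0, hR1, hE1, hE2, hL0, hL1, hexp, mul_pow, ← pow_mul, hppow]
    ring
end

section
/- Suppose in addition that p and q are twin primes with q = p + 2. Then the 2-adic complexity of the second Ding–Helleseth sequence equals N − 1, i.e. Φ₂(s) = ⌊log₂((2^N − 1)/gcd(2^N − 1, S(2)))⌋ = N − 1. -/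
open Finset

/-!
Let `r` be a prime dividing both `2 ^ N - 1` and `S(2)`; we derive a contradiction, so the gcd
is `1` and `Φ₂ = ⌊log₂ (2 ^ N - 1)⌋ = N - 1`.

By the Chinese remainder theorem `D₁ ∪ Q` consists of the `i` with `p ∤ i` and `i mod q` zero or
a quadratic nonresidue. Splitting `i < pq` by residues, in `ZMod r` with `β = 2`
  `S(β) = (1 + η₁(β)) · Σ_{k<p} β^{qk} - (1 + η(β^p))`,
where `η₁(γ) = Σ_{u nonresidue} γ^u` and `η` is the Gauss period of order two (over `ZMod q`) on
the coset `p⁻¹ · (nonresidues)`. The order of `2` modulo `r` is `p`, `q` or `pq`, and `r ≡ 1` modulo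
twice that order.
* Order `p`: the geometric sum vanishes and `1 + η(1)` counts between `1` and `q` elements;
  since `q = p + 2 < 2p + 1 ≤ r` this count is nonzero mod `r`.
* Order `q` or `pq`: `S(2) = 0` forces `1 + η = 0` for a Gauss period of an element of order `q`.
  Then the two periods are `-1` and `0`, so their difference, the quadratic Gauss sum, squares
  to `1`; but it squares to `±q`, and `q ± 1 < r`.
-/

theorem Finset.sum_range_mul_eq_sum_sum {M : Type*} [AddCommMonoid M] (m n : ℕ) (f : ℕ → M) :
    ∑ i ∈ range (m * n), f i = ∑ k ∈ range m, ∑ v ∈ range n, f (v + n * k) := by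
  rw [sum_range, ← finProdFinEquiv.sum_comp, Fintype.sum_prod_type]
  simp [sum_range]

theorem ZMod.sum_range_eq_sum_univ {M : Type*} [AddCommMonoid M] (n : ℕ) [NeZero n]
    (f : ZMod n → ℕ → M) : ∑ i ∈ range n, f i i = ∑ u : ZMod n, f u u.val :=
  sum_nbij' (↑) ZMod.val (fun _ _ => mem_univ _) (fun u _ => mem_range.2 u.val_lt)
    (fun _ hi => ZMod.val_natCast_of_lt (mem_range.1 hi)) (fun u _ => ZMod.natCast_zmod_val u)
    fun _ hi => by rw [ZMod.val_natCast_of_lt (mem_range.1 hi)]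

theorem geom_sum_eq_zero_of_pow_eq_one {K : Type*} [DivisionRing K] {x : K} {n : ℕ} (hx : x ≠ 1)
    (h : x ^ n = 1) : ∑ i ∈ range n, x ^ i = 0 := by
  rw [geom_sum_eq hx, h, sub_self, zero_div]

theorem Nat.log_pow_sub_one {b n : ℕ} (hb : 1 < b) (hn : n ≠ 0) :
    Nat.log b (b ^ n - 1) = n - 1 := by
  obtain ⟨k, rfl⟩ : ∃ k, n = k + 1 := ⟨n - 1, by omega⟩
  have h1 : 1 ≤ b ^ k := Nat.one_le_pow _ _ (by omega)
  have h2 : b ^ k * 2 ≤ b ^ (k + 1) := pow_succ b k ▸ Nat.mul_le_mul_left _ hb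
  refine Nat.log_eq_of_pow_le_of_lt_pow ?_ ?_ <;> simp only [Nat.add_sub_cancel] <;> omega

theorem ZMod.natCast_eq_natCast_iff_of_coprime {p q : ℕ} (hpq : p.Coprime q) {m n : ℕ} :
    (m : ZMod (p * q)) = n ↔ (m : ZMod p) = n ∧ (m : ZMod q) = n := by
  simp only [ZMod.natCast_eq_natCast_iff]
  exact (Nat.modEq_and_modEq_iff_modEq_mul hpq).symm

theorem Nat.exists_two_mul_add_modEq {m n : ℕ} (hm : 0 < m) (hn : 0 < n) (hmn : m.Coprime n)
    (a c : ℕ) :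
    ∃ t < m * n, ∃ i < 2, 2 * t + 1 + i ≡ a [MOD 2 * m] ∧ 2 * t ≡ 2 * c [MOD 2 * n] := by
  -- `a'` stands for `a - 1` modulo `2 * m`, without truncated subtraction
  set a' := a + (2 * m - 1)
  obtain ⟨t₀, ht₀m, ht₀n⟩ := Nat.chineseRemainder hmn (a' / 2) c
  refine ⟨t₀ % (m * n), Nat.mod_lt _ (Nat.mul_pos hm hn), a' % 2, Nat.mod_lt _ two_pos, ?_, ?_⟩
  · have ht : t₀ % (m * n) ≡ a' / 2 [MOD m] := ((Nat.mod_modEq _ _).of_mul_right n).trans ht₀m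
    calc 2 * (t₀ % (m * n)) + 1 + a' % 2 ≡ 2 * (a' / 2) + 1 + a' % 2 [MOD 2 * m] :=
          ((ht.mul_left' 2).add_right 1).add_right _
      _ = a + 2 * m := by omega
      _ ≡ a [MOD 2 * m] := Nat.add_modEq_right
  · exact (((Nat.mod_modEq _ _).of_mul_left m).trans ht₀n).mul_left' 2

theorem ZMod.exists_pow_two_mul_add_one_eq_iff {q : ℕ} [Fact q.Prime] (hq : q ≠ 2) {g : ZMod q}
    (hg : orderOf g = q - 1) {y : ZMod q} :
    (∃ c, g ^ (2 * c + 1) = y) ↔ y ≠ 0 ∧ ¬IsSquare y := by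
  have hq3 : 3 ≤ q := (Fact.out : q.Prime).two_le.lt_of_ne' hq
  have : NeZero (q - 1) := ⟨by omega⟩
  have hprim : IsPrimitiveRoot g (q - 1) := hg ▸ IsPrimitiveRoot.orderOf g
  have hg0 : g ≠ 0 := hprim.ne_zero (NeZero.ne _)
  have hg_sq : ¬IsSquare g := by
    rw [ZMod.euler_criterion q hg0]
    intro h
    have := Nat.le_of_dvd (by omega) (hg ▸ orderOf_dvd_of_pow_eq_one h)
    omega
  constructor
  · rintro ⟨c, rfl⟩
    refine ⟨pow_ne_zero _ hg0, ?_⟩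
    rw [← quadraticChar_neg_one_iff_not_isSquare] at hg_sq ⊢
    rw [map_pow, hg_sq, Odd.neg_one_pow ⟨c, rfl⟩]
  · rintro ⟨hy0, hy⟩
    obtain ⟨k, -, rfl⟩ := hprim.eq_pow_of_pow_eq_one (ZMod.pow_card_sub_one_eq_one hy0)
    obtain ⟨c, rfl | rfl⟩ := Nat.even_or_odd' k
    · exact absurd ⟨g ^ c, by ring⟩ hy
    · exact ⟨c, rfl⟩

section SumSplitting

variable {R : Type*} [CommRing R] {q : ℕ} [NeZero q] (P : ZMod q → Prop) [DecidablePred P] (β : R)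

theorem sum_range_mul_ite_eq_mul_geom_sum (p : ℕ) :
    ∑ i ∈ range (p * q), (if P i then β ^ i else 0) =
      (∑ u : ZMod q, if P u then β ^ u.val else 0) * ∑ k ∈ range p, (β ^ q) ^ k := by
  rw [sum_range_mul_eq_sum_sum, sum_comm, sum_mul,
    ← ZMod.sum_range_eq_sum_univ q fun u v => (if P u then β ^ v else 0) * _]
  refine sum_congr rfl fun v _ => ?_
  simp only [mul_sum, Nat.cast_add, Nat.cast_mul, ZMod.natCast_self, zero_mul, add_zero, ite_mul,
    pow_add, pow_mul]

theorem sum_range_mul_ite_natCast_eq_zero_and (p : ℕ) [NeZero p] :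
    ∑ i ∈ range (p * q), (if (i : ZMod p) = 0 ∧ P i then β ^ i else 0) =
      ∑ u : ZMod q, if P (p * u) then (β ^ p) ^ u.val else 0 := by
  rw [mul_comm, sum_range_mul_eq_sum_sum,
    ← ZMod.sum_range_eq_sum_univ q fun u j => if P (p * u) then (β ^ p) ^ j else 0]
  refine sum_congr rfl fun j _ => ?_
  have hv : ∀ v ∈ range p, ((v + p * j : ℕ) : ZMod p) = 0 ↔ v = 0 := fun v hv => by
    simp [ZMod.natCast_eq_zero_iff, Nat.dvd_iff_mod_eq_zero, Nat.mod_eq_of_lt (mem_range.1 hv)]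
  rw [sum_eq_single_of_mem 0 (mem_range.2 (NeZero.pos p)) fun v hv' h0 =>
    if_neg fun h => h0 ((hv v hv').1 h.1)]
  simp [pow_mul]

theorem sum_range_mul_ite_natCast_ne_zero_and (p : ℕ) [NeZero p] :
    ∑ i ∈ range (p * q), (if (i : ZMod p) ≠ 0 ∧ P i then β ^ i else 0) =
      (∑ u : ZMod q, if P u then β ^ u.val else 0) * ∑ k ∈ range p, (β ^ q) ^ k -
        ∑ u : ZMod q, if P (p * u) then (β ^ p) ^ u.val else 0 := by
  rw [← sum_range_mul_ite_eq_mul_geom_sum, ← sum_range_mul_ite_natCast_eq_zero_and,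
    ← sum_sub_distrib]
  refine sum_congr rfl fun i _ => ?_
  by_cases h : (i : ZMod p) = 0 <;> simp [h]

end SumSplitting

/-- `1 + η`, where `η = Σ γ ^ u` over `u ∈ a⁻¹ · (nonresidues mod q)` is a Gauss period of
order two. -/
def zeroOrNonsquarePeriod {R : Type*} [Semiring R] {q : ℕ} [NeZero q] (a : ZMod q) (γ : R) : R :=
  ∑ u : ZMod q, if a * u = 0 ∨ ¬IsSquare (a * u) then γ ^ u.val else 0

section GaussPeriod

variable {F : Type*} [Field F] {q : ℕ} [Fact q.Prime]

theorem two_mul_zeroOrNonsquarePeriod {γ : F} (hγ : γ ^ q = 1) (hγ₁ : γ ≠ 1) {a : ZMod q}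
    (ha : a ≠ 0) :
    2 * zeroOrNonsquarePeriod a γ =
      1 - (quadraticChar (ZMod q)).ringHomComp (Int.castRingHom F) a *
        gaussSum ((quadraticChar (ZMod q)).ringHomComp (Int.castRingHom F))
          (AddChar.zmodChar q hγ) := by
  set χ := (quadraticChar (ZMod q)).ringHomComp (Int.castRingHom F)
  have hsum : ∑ u : ZMod q, γ ^ u.val = 0 := by
    rw [← ZMod.sum_range_eq_sum_univ q fun _ i => γ ^ i, geom_sum_eq_zero_of_pow_eq_one hγ₁ hγ]
  -- the indicator of `a * u = 0 ∨ ¬IsSquare (a * u)` is `(1 - χ (a * u) + [u = 0]) / 2`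
  have hpoint : ∀ u : ZMod q, 2 * (if a * u = 0 ∨ ¬IsSquare (a * u) then γ ^ u.val else 0) =
      γ ^ u.val - χ a * (χ u * AddChar.zmodChar q hγ u) + if u = 0 then 1 else 0 := by
    intro u
    rw [← mul_assoc, ← map_mul, AddChar.zmodChar_apply]
    rcases eq_or_ne u 0 with rfl | hu
    · simp [MulChar.map_nonunit χ not_isUnit_zero]
      norm_num
    have hau : a * u ≠ 0 := mul_ne_zero ha hu
    by_cases hsq : IsSquare (a * u)
    · simp [hau, hsq, hu, χ, (quadraticChar_one_iff_isSquare hau).mpr hsq]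
    · simp [hau, hsq, hu, χ, quadraticChar_neg_one_iff_not_isSquare.mpr hsq]
      ring
  rw [zeroOrNonsquarePeriod, mul_sum, sum_congr rfl fun u _ => hpoint u, sum_add_distrib,
    sum_sub_distrib, hsum, gaussSum, ← mul_sum, sum_ite_eq' univ (0 : ZMod q),
    if_pos (mem_univ _)]
  ring

theorem zeroOrNonsquarePeriod_ne_zero (hF : ringChar F ≠ 2) (hq : q ≠ 2) {γ : F}
    (hγ : orderOf γ = q) (hq₁ : (q : F) ≠ 1) (hq₂ : (q : F) ≠ -1) {a : ZMod q} (ha : a ≠ 0) :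
    zeroOrNonsquarePeriod a γ ≠ 0 := by
  have hγq : γ ^ q = 1 := hγ ▸ pow_orderOf_eq_one γ
  have hγ₁ : γ ≠ 1 := by
    rintro rfl
    exact (Fact.out : q.Prime).one_lt.ne (orderOf_one.symm.trans hγ)
  have hsum := two_mul_zeroOrNonsquarePeriod hγq hγ₁ ha
  set χ := (quadraticChar (ZMod q)).ringHomComp (Int.castRingHom F)
  have hχ₂ : χ.IsQuadratic := (quadraticChar_isQuadratic _).comp _
  have hχ₁ : χ ≠ 1 := by
    obtain ⟨b, hb⟩ := quadraticChar_exists_neg_one' (F := ZMod q) (by rwa [ZMod.ringChar_zmod_n])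
    refine MulChar.ne_one_iff.mpr ⟨b, ?_⟩
    simpa [χ, hb] using Ring.neg_one_ne_one_of_char_ne_two hF
  have hψ : (AddChar.zmodChar q hγq).IsPrimitive :=
    AddChar.zmodChar_primitive_of_primitive_root q (hγ ▸ IsPrimitiveRoot.orderOf γ)
  intro h0
  rw [h0, mul_zero, eq_comm, sub_eq_zero] at hsum
  have hsq : χ (-1) * q = 1 := by
    have := congrArg (· ^ 2) hsum
    simp only [mul_pow, gaussSum_sq hχ₁ hχ₂ hψ, ZMod.card, one_pow] at this
    rcases hχ₂ a with h | h | h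
    · exact absurd h (MulChar.apply_ne_zero_iff.mpr (Ne.isUnit ha))
    all_goals simpa [h, eq_comm] using this
  rcases hχ₂ (-1) with h | h | h <;> rw [h] at hsq
  · simp at hsq
  · exact hq₁ (by simpa using hsq)
  · exact hq₂ (by linear_combination -hsq)

end GaussPeriod

theorem zeroOrNonsquarePeriod_pow {R : Type*} [Semiring R] {q : ℕ} [Fact q.Prime] {γ : R}
    (hγ : γ ^ q = 1) (a : ZMod q) {n : ℕ} (hn : (n : ZMod q) ≠ 0) :
    zeroOrNonsquarePeriod a (γ ^ n) = zeroOrNonsquarePeriod (a * (n : ZMod q)⁻¹) γ := by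
  refine Fintype.sum_equiv (Equiv.mulLeft₀ (n : ZMod q) hn) _ _ fun u => ?_
  have hpow : (γ ^ n) ^ u.val = γ ^ ((n : ZMod q) * u).val := by
    rw [← pow_mul]
    exact pow_eq_pow_of_modEq (by rw [← ZMod.natCast_eq_natCast_iff]; simp) hγ
  simp only [Equiv.mulLeft₀_apply, mul_assoc, inv_mul_cancel_left₀ hn, hpow]

theorem zeroOrNonsquarePeriod_ne_zero_of_lt {q r : ℕ} [Fact q.Prime] [Fact r.Prime] (hq : q ≠ 2)
    {γ : ZMod r} (hγ : orderOf γ = q) (hqr : q + 1 < r) {a : ZMod q} (ha : a ≠ 0) :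
    zeroOrNonsquarePeriod a γ ≠ 0 := by
  have hq1 := (Fact.out : q.Prime).one_lt
  refine zeroOrNonsquarePeriod_ne_zero (by rw [ZMod.ringChar_zmod_n]; omega) hq hγ ?_ ?_ ha
  · rw [Ne, ← Nat.cast_one, ZMod.natCast_eq_natCast_iff', Nat.mod_eq_of_lt (by omega),
      Nat.mod_eq_of_lt (by omega)]
    exact hq1.ne'
  · rw [Ne, eq_neg_iff_add_eq_zero, ← Nat.cast_one, ← Nat.cast_add, ZMod.natCast_eq_zero_iff]
    exact Nat.not_dvd_of_pos_of_lt (by omega) hqr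

section Cyclotomy

variable {p q g x : ℕ} [Fact p.Prime] [Fact q.Prime]

theorem natCast_mem_DHD1_iff (hpq : p ≠ q) (hgcd : Nat.gcd (p - 1) (q - 1) = 2)
    (hgp : orderOf (g : ZMod p) = p - 1) (hgq : orderOf (g : ZMod q) = q - 1)
    (hxp : (x : ZMod p) = (g : ZMod p)) (hxq : (x : ZMod q) = 1) (n : ℕ) :
    (n : ZMod (p * q)) ∈ DHD1 p q g x ↔
      (n : ZMod p) ≠ 0 ∧ (n : ZMod q) ≠ 0 ∧ ¬IsSquare (n : ZMod q) := by
  have hp := (Fact.out : p.Prime).two_le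
  have hq := (Fact.out : q.Prime).two_le
  obtain ⟨m, hm⟩ : 2 ∣ p - 1 := hgcd ▸ Nat.gcd_dvd_left _ _
  obtain ⟨m', hm'⟩ : 2 ∣ q - 1 := hgcd ▸ Nat.gcd_dvd_right _ _
  have hmm' : m.Coprime m' := by
    rw [hm, hm', Nat.gcd_mul_left] at hgcd
    omega
  have hcard : (p - 1) * (q - 1) / 4 = m * m' := by
    rw [hm, hm', show 2 * m * (2 * m') = 4 * (m * m') by ring, Nat.mul_div_cancel_left _ four_pos]
  have hcrt : ∀ t i : ℕ, (g : ZMod (p * q)) * (g ^ (2 * t) * x ^ i) = n ↔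
      (g : ZMod p) ^ (2 * t + 1 + i) = n ∧ (g : ZMod q) ^ (2 * t + 1) = n := fun t i => by
    have : (g : ZMod (p * q)) * (g ^ (2 * t) * x ^ i) = ((g ^ (2 * t + 1) * x ^ i : ℕ) : _) := by
      push_cast; ring
    rw [this, ZMod.natCast_eq_natCast_iff_of_coprime ((Nat.coprime_primes Fact.out Fact.out).2 hpq)]
    push_cast
    rw [hxp, hxq, one_pow, mul_one, ← pow_add]
  have : NeZero (p - 1) := ⟨by omega⟩
  have hprim : IsPrimitiveRoot (g : ZMod p) (p - 1) := hgp ▸ IsPrimitiveRoot.orderOf _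
  rw [← ZMod.exists_pow_two_mul_add_one_eq_iff (by omega) hgq]
  simp only [DHD1, DHD0, image_image, mem_image, mem_product, mem_range, Prod.exists,
    Function.comp_apply, hcrt, hcard]
  constructor
  · rintro ⟨t, i, -, hp', hq'⟩
    exact ⟨hp' ▸ pow_ne_zero _ (hprim.ne_zero (NeZero.ne _)), t, hq'⟩
  · rintro ⟨hn0, c, hc⟩
    obtain ⟨a, -, ha⟩ := hprim.eq_pow_of_pow_eq_one (ZMod.pow_card_sub_one_eq_one hn0)
    obtain ⟨t, ht, i, hi, hta, htc⟩ := Nat.exists_two_mul_add_modEq (by omega) (by omega) hmm' a c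
    refine ⟨t, i, ⟨ht, hi⟩, ?_, ?_⟩
    · rw [← ha]
      exact pow_eq_pow_of_modEq (hm ▸ hta) (hgp ▸ pow_orderOf_eq_one _)
    · rw [← hc]
      exact pow_eq_pow_of_modEq (hm' ▸ htc.add_right 1) (hgq ▸ pow_orderOf_eq_one _)

theorem natCast_mem_DHQ_iff (hpq : p ≠ q) (n : ℕ) :
    (n : ZMod (p * q)) ∈ DHQ p q ↔ (n : ZMod p) ≠ 0 ∧ (n : ZMod q) = 0 := by
  have hqp : (q : ZMod p) ≠ 0 := by
    rw [Ne, ZMod.natCast_eq_zero_iff, Nat.prime_dvd_prime_iff_eq Fact.out Fact.out]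
    exact hpq
  simp only [DHQ, mem_image, mem_Icc,
    ZMod.natCast_eq_natCast_iff_of_coprime ((Nat.coprime_primes Fact.out Fact.out).2 hpq)]
  push_cast
  simp only [ZMod.natCast_self, mul_zero]
  constructor
  · rintro ⟨k, ⟨hk1, hkp⟩, hkn, hqn⟩
    refine ⟨hkn ▸ mul_ne_zero ?_ hqp, hqn.symm⟩
    rw [Ne, ZMod.natCast_eq_zero_iff]
    exact Nat.not_dvd_of_pos_of_lt hk1 (by omega)
  · rintro ⟨hn0, hqn⟩
    refine ⟨((n : ZMod p) * (q : ZMod p)⁻¹).val, ⟨?_, ?_⟩, ?_, hqn.symm⟩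
    · exact Nat.pos_of_ne_zero ((ZMod.val_ne_zero _).2 (mul_ne_zero hn0 (inv_ne_zero hqp)))
    · exact Nat.le_sub_one_of_lt (ZMod.val_lt _)
    · rw [ZMod.natCast_zmod_val, inv_mul_cancel_right₀ hqp]

theorem DHs2_eq_ite (hpq : p ≠ q) (hgcd : Nat.gcd (p - 1) (q - 1) = 2)
    (hgp : orderOf (g : ZMod p) = p - 1) (hgq : orderOf (g : ZMod q) = q - 1)
    (hxp : (x : ZMod p) = (g : ZMod p)) (hxq : (x : ZMod q) = 1) (i : ℕ) :
    DHs2 p q g x i =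
      if (i : ZMod p) ≠ 0 ∧ ((i : ZMod q) = 0 ∨ ¬IsSquare (i : ZMod q)) then 1 else 0 := by
  refine if_congr ?_ rfl rfl
  rw [mem_union, natCast_mem_DHD1_iff hpq hgcd hgp hgq hxp hxq, natCast_mem_DHQ_iff hpq]
  tauto

end Cyclotomy

/-- `S(β)` for the second Ding–Helleseth sequence, in terms of Gauss periods. -/
def DHS2PeriodForm {R : Type*} [CommRing R] (p q : ℕ) [NeZero q] (β : R) : R :=
  zeroOrNonsquarePeriod (1 : ZMod q) β * ∑ k ∈ range p, (β ^ q) ^ k -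
    zeroOrNonsquarePeriod (p : ZMod q) (β ^ p)

theorem natCast_DHS2num2 {R : Type*} [CommRing R] {p q g x : ℕ} [Fact p.Prime] [Fact q.Prime]
    (hpq : p ≠ q) (hgcd : Nat.gcd (p - 1) (q - 1) = 2)
    (hgp : orderOf (g : ZMod p) = p - 1) (hgq : orderOf (g : ZMod q) = q - 1)
    (hxp : (x : ZMod p) = (g : ZMod p)) (hxq : (x : ZMod q) = 1) :
    (DHS2num2 p q g x : R) = DHS2PeriodForm p q (2 : R) := by
  simp only [DHS2num2, DHS2PeriodForm, zeroOrNonsquarePeriod, one_mul]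
  rw [← sum_range_mul_ite_natCast_ne_zero_and (fun v : ZMod q => v = 0 ∨ ¬IsSquare v),
    Nat.cast_sum]
  refine sum_congr rfl fun i _ => ?_
  rw [DHs2_eq_ite hpq hgcd hgp hgq hxp hxq]
  split_ifs <;> simp

section OrderOfTwo

variable {p q r : ℕ} [Fact p.Prime] [Fact q.Prime] [Fact r.Prime] {β : ZMod r}

theorem DHS2PeriodForm_ne_zero_of_orderOf_eq_left (hpq : p ≠ q) (hβ : orderOf β = p)
    (hqr : q < r) : DHS2PeriodForm p q β ≠ 0 := by
  have hβp : β ^ p = 1 := hβ ▸ pow_orderOf_eq_one β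
  have hβq : β ^ q ≠ 1 := fun h => hpq <|
    (Nat.prime_dvd_prime_iff_eq Fact.out Fact.out).1 (hβ ▸ orderOf_dvd_of_pow_eq_one h)
  have hE : ∑ k ∈ range p, (β ^ q) ^ k = 0 :=
    geom_sum_eq_zero_of_pow_eq_one hβq (by rw [← pow_mul, mul_comm, pow_mul, hβp, one_pow])
  rw [DHS2PeriodForm, hE, mul_zero, zero_sub, neg_ne_zero, hβp, zeroOrNonsquarePeriod]
  simp only [one_pow, sum_boole]
  rw [Ne, ZMod.natCast_eq_zero_iff]
  exact Nat.not_dvd_of_pos_of_lt (card_pos.2 ⟨0, by simp⟩)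
    ((card_filter_le _ _).trans_lt (by simpa using hqr))

theorem DHS2PeriodForm_ne_zero_of_orderOf_eq_right (hpq : p < q) (hq : q ≠ 2)
    (hβ : orderOf β = q) (hqr : q + 1 < r) : DHS2PeriodForm p q β ≠ 0 := by
  have hβq : β ^ q = 1 := hβ ▸ pow_orderOf_eq_one β
  have hp : (p : ZMod q) ≠ 0 := by
    rw [Ne, ZMod.natCast_eq_zero_iff]
    exact Nat.not_dvd_of_pos_of_lt (Fact.out : p.Prime).pos hpq
  have hp1 : (p : ZMod r) - 1 ≠ 0 := by
    rw [← Nat.cast_pred (Fact.out : p.Prime).pos, Ne, ZMod.natCast_eq_zero_iff]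
    exact Nat.not_dvd_of_pos_of_lt (by have := (Fact.out : p.Prime).two_le; omega) (by omega)
  rw [DHS2PeriodForm, zeroOrNonsquarePeriod_pow hβq _ hp, mul_inv_cancel₀ hp]
  simp only [hβq, one_pow, sum_const, card_range, nsmul_eq_mul, mul_one]
  rw [← mul_sub_one]
  exact mul_ne_zero (zeroOrNonsquarePeriod_ne_zero_of_lt hq hβ hqr one_ne_zero) hp1

theorem DHS2PeriodForm_ne_zero_of_orderOf_eq_mul (hpq : p ≠ q) (hq : q ≠ 2)
    (hβ : orderOf β = p * q) (hqr : q + 1 < r) : DHS2PeriodForm p q β ≠ 0 := by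
  have hp := (Fact.out : p.Prime).two_le
  have hβq : β ^ q ≠ 1 := fun h => by
    have := Nat.le_of_dvd (Fact.out : q.Prime).pos (hβ ▸ orderOf_dvd_of_pow_eq_one h)
    nlinarith [(Fact.out : q.Prime).pos]
  have hE : ∑ k ∈ range p, (β ^ q) ^ k = 0 :=
    geom_sum_eq_zero_of_pow_eq_one hβq (by rw [← pow_mul, mul_comm, ← hβ, pow_orderOf_eq_one])
  have hβp : orderOf (β ^ p) = q := by
    rw [orderOf_pow_of_dvd (by omega) (hβ ▸ dvd_mul_right p q), hβ,
      Nat.mul_div_cancel_left _ (by omega)]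
  have hp : (p : ZMod q) ≠ 0 := by
    rw [Ne, ZMod.natCast_eq_zero_iff, Nat.prime_dvd_prime_iff_eq Fact.out Fact.out]
    exact hpq.symm
  rw [DHS2PeriodForm, hE, mul_zero, zero_sub, neg_ne_zero]
  exact zeroOrNonsquarePeriod_ne_zero_of_lt hq hβp hqr hp

end OrderOfTwo

theorem coprime_two_pow_sub_one_DHS2num2 {p q g x : ℕ} [Fact p.Prime] [Fact q.Prime]
    (hpo : Odd p) (hqo : Odd q) (hpq : p < q) (hgcd : Nat.gcd (p - 1) (q - 1) = 2)
    (hgp : orderOf (g : ZMod p) = p - 1) (hgq : orderOf (g : ZMod q) = q - 1)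
    (hxp : (x : ZMod p) = (g : ZMod p)) (hxq : (x : ZMod q) = 1) (htwin : q = p + 2) :
    Nat.Coprime (2 ^ (p * q) - 1) (DHS2num2 p q g x) := by
  refine Nat.coprime_of_dvd fun r hr hrN hrS => ?_
  have := Fact.mk hr
  have hp := (Fact.out : p.Prime).two_le
  have hq := (Fact.out : q.Prime).two_le
  have hq2 : q ≠ 2 := by rintro rfl; norm_num at hqo
  have hpq0 : p * q ≠ 0 := by positivity
  have h2N : (2 : ZMod r) ^ (p * q) = 1 := by
    have h := (ZMod.natCast_eq_zero_iff _ r).2 hrN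
    rwa [Nat.cast_sub Nat.one_le_two_pow, Nat.cast_pow, Nat.cast_ofNat, Nat.cast_one,
      sub_eq_zero] at h
  have h20 : (2 : ZMod r) ≠ 0 := fun h => by simp [h, zero_pow hpq0] at h2N
  have hS : DHS2PeriodForm p q (2 : ZMod r) = 0 := by
    rw [← natCast_DHS2num2 hpq.ne hgcd hgp hgq hxp hxq]
    exact (ZMod.natCast_eq_zero_iff _ _).2 hrS
  have hr_odd : Odd r := hr.odd_of_ne_two <| by
    rintro rfl
    have : 2 ∣ 2 ^ (p * q) := dvd_pow_self 2 hpq0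
    have := Nat.one_le_two_pow (n := p * q)
    omega
  have hdvd : orderOf (2 : ZMod r) ∣ p * q := orderOf_dvd_of_pow_eq_one h2N
  have hdr : 2 * orderOf (2 : ZMod r) < r := by
    have h2d : 2 * orderOf (2 : ZMod r) ∣ r - 1 :=
      Nat.Coprime.mul_dvd_of_dvd_of_dvd (Nat.coprime_two_left.2 ((hpo.mul hqo).of_dvd_nat hdvd))
        (Nat.Odd.sub_odd hr_odd odd_one).two_dvd (ZMod.orderOf_dvd_card_sub_one h20)
    have := hr.two_le
    have := Nat.le_of_dvd (by omega) h2d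
    omega
  obtain ⟨d₁, d₂, hd₁, hd₂, hd⟩ := Nat.dvd_mul.1 hdvd
  rw [← hd] at hdr
  rcases (Nat.dvd_prime Fact.out).1 hd₁ with rfl | rfl <;>
    rcases (Nat.dvd_prime Fact.out).1 hd₂ with rfl | rfl
  · have h21 : (2 : ZMod r) = 1 := orderOf_eq_one_iff.1 (by rw [← hd, one_mul])
    exact one_ne_zero (by linear_combination h21 : (1 : ZMod r) = 0)
  · exact DHS2PeriodForm_ne_zero_of_orderOf_eq_right hpq hq2 (by rw [← hd, one_mul]) (by omega) hS
  · exact DHS2PeriodForm_ne_zero_of_orderOf_eq_left hpq.ne (by rw [← hd, mul_one])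
      (by rw [Nat.odd_iff] at hpo; omega) hS
  · exact DHS2PeriodForm_ne_zero_of_orderOf_eq_mul hpq.ne hq2 hd.symm (by nlinarith) hS

theorem stmt3 (p q g x : ℕ) (hp : Nat.Prime p) (hq : Nat.Prime q)
    (hpo : Odd p) (hqo : Odd q) (hpq : p < q)
    (hgcd : Nat.gcd (p - 1) (q - 1) = 2)
    (hgp : orderOf (g : ZMod p) = p - 1) (hgq : orderOf (g : ZMod q) = q - 1)
    (hxp : (x : ZMod p) = (g : ZMod p)) (hxq : (x : ZMod q) = 1) (htwin : q = p + 2) :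
    Nat.log 2 ((2 ^ (p * q) - 1) / Nat.gcd (2 ^ (p * q) - 1) (DHS2num2 p q g x)) =
      p * q - 1 := by
  have := Fact.mk hp
  have := Fact.mk hq
  rw [(coprime_two_pow_sub_one_DHS2num2 hpo hqo hpq hgcd hgp hgq hxp hxq htwin).gcd_eq_one,
    Nat.div_one, Nat.log_pow_sub_one one_lt_two (Nat.mul_pos hp.pos hq.pos).ne']
end

section
/- If q ≡ 1 (mod 4), then the generalized Gauss periods of order 2 modulo N = pq satisfy η₀^{(N)} · η₁^{(N)} = −(q−1)/4. -/
open Finset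

/-!
Writing `ψ(a) = ξ_N^a` for the primitive additive character of `ZMod N`, the parametrisation
`(s, i) ↦ g^s x^i` (`s < lcm(p-1, q-1)`, `i < 2`) is injective because `gcd(p-1, q-1) = 2`, so by
counting `D₀ ∪ D₁` is the whole unit group; moreover `D₀` and `D₁` are exactly the units whose
reduction mod `q` is a square, resp. a non-square (`x ≡ 1 mod q`, and `g` is a non-square mod `q`).
Hence `η₀ + η₁ = ∑_{a ∈ ℤ_N^×} ψ(a)` and `η₀ - η₁ = ∑_{a ∈ ℤ_N^×} χ_q(a) ψ(a)`. By the Chinese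
remainder theorem both sums factor into a sum over `𝔽_p^×` (equal to `-1`) times a sum over `𝔽_q^×`,
which gives `η₀ + η₁ = 1` and `η₀ - η₁ = -G(χ_q)`, whose square is `χ_q(-1) q = q`.
Therefore `4 η₀ η₁ = (η₀ + η₁)² - (η₀ - η₁)² = 1 - q`.
-/

namespace ZMod

variable {m n : ℕ}

lemma chineseRemainder_fst (h : m.Coprime n) (a : ZMod (m * n)) :
    (chineseRemainder h a).1 = a.cast :=
  congr($(Subsingleton.elim ((RingHom.fst _ _).comp (chineseRemainder h).toRingHom)
    (castHom (dvd_mul_right m n) (ZMod m))) a)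

lemma chineseRemainder_snd (h : m.Coprime n) (a : ZMod (m * n)) :
    (chineseRemainder h a).2 = a.cast :=
  congr($(Subsingleton.elim ((RingHom.snd _ _).comp (chineseRemainder h).toRingHom)
    (castHom (dvd_mul_left n m) (ZMod n))) a)

lemma isUnit_iff_isUnit_cast (h : m.Coprime n) {a : ZMod (m * n)} :
    IsUnit a ↔ IsUnit (a.cast : ZMod m) ∧ IsUnit (a.cast : ZMod n) := by
  rw [← chineseRemainder_fst h, ← chineseRemainder_snd h, ← Prod.isUnit_iff, isUnit_map_iff]

lemma isUnit_natCast_mul_iff (h : m.Coprime n) (k : ℕ) :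
    IsUnit (k : ZMod (m * n)) ↔ IsUnit (k : ZMod m) ∧ IsUnit (k : ZMod n) := by
  rw [isUnit_iff_isUnit_cast h, cast_natCast (dvd_mul_right m n), cast_natCast (dvd_mul_left n m)]

lemma card_filter_isUnit (n : ℕ) [NeZero n] : #{a : ZMod n | IsUnit a} = n.totient := by
  rw [← card_units_eq_totient, ← Finset.card_univ, ← card_map ⟨Units.val, Units.val_injective⟩]
  congr
  ext a
  simp [IsUnit, eq_comm]

lemma isOfFinOrder_of_orderOf_eq_sub_one {a : ZMod n} (hn : 1 < n) (h : orderOf a = n - 1) :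
    IsOfFinOrder a :=
  orderOf_pos_iff.mp (h ▸ Nat.sub_pos_of_lt hn)

end ZMod

theorem Nat.eq_and_eq_of_modEq_of_gcd_eq_two {a b t t' i i' : ℕ} (hgcd : a.gcd b = 2)
    (ht : t < a * b / 4) (ht' : t' < a * b / 4) (hi : i < 2) (hi' : i' < 2)
    (ha : 2 * t + i ≡ 2 * t' + i' [MOD a]) (hb : 2 * t ≡ 2 * t' [MOD b]) : t = t' ∧ i = i' := by
  obtain ⟨a', rfl⟩ : 2 ∣ a := hgcd ▸ Nat.gcd_dvd_left _ _
  obtain ⟨b', rfl⟩ : 2 ∣ b := hgcd ▸ Nat.gcd_dvd_right _ _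
  have hii : i = i' :=
    ((hb.of_dvd (dvd_mul_right 2 b')).add_left_cancel
      (ha.of_dvd (dvd_mul_right 2 a'))).eq_of_lt_of_lt hi hi'
  subst hii
  have hlcm : (2 * a').lcm (2 * b') = 2 * (2 * a' * (2 * b') / 4) := by
    have hcop : a'.gcd b' = 1 := by
      rw [Nat.gcd_mul_left] at hgcd
      omega
    rw [Nat.lcm_mul_left, Nat.lcm_eq_mul_div, hcop, Nat.div_one,
      show 2 * a' * (2 * b') = 4 * (a' * b') by ring, Nat.mul_div_cancel_left _ (by norm_num)]
  have h2 : 2 * t ≡ 2 * t' [MOD 2 * (2 * a' * (2 * b') / 4)] :=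
    hlcm ▸ Nat.mod_lcm (Nat.ModEq.add_right_cancel' i ha) hb
  exact ⟨(Nat.ModEq.mul_left_cancel' two_ne_zero h2).eq_of_lt_of_lt ht ht', rfl⟩

namespace AddChar

variable {R : Type*} [CommRing R]

lemma sum_isUnit_prod_mul {A B : Type*} [CommRing A] [CommRing B] [Fintype A] [Fintype B]
    [DecidableEq A] [DecidableEq B] (ψ : AddChar (A × B) R) (φ : B → R) :
    ∑ y : A × B with IsUnit y, φ y.2 * ψ y =
      (∑ a : A with IsUnit a, ψ.compAddMonoidHom (.inl A B) a) *
        ∑ b : B with IsUnit b, φ b * ψ.compAddMonoidHom (.inr A B) b := by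
  have hunits : univ.filter (fun y : A × B => IsUnit y) =
      univ.filter (fun a : A => IsUnit a) ×ˢ univ.filter (fun b : B => IsUnit b) := by
    ext
    simp [Prod.isUnit_iff]
  rw [hunits, sum_product, sum_mul_sum]
  refine sum_congr rfl fun a _ => sum_congr rfl fun b _ => ?_
  rw [compAddMonoidHom_apply, compAddMonoidHom_apply, AddMonoidHom.inl_apply,
    AddMonoidHom.inr_apply, mul_left_comm, ← map_add_eq_mul, Prod.mk_add_mk, add_zero, zero_add]

lemma compAddMonoidHom_ne_one {G H : Type*} [AddGroup G] [AddGroup H] [Nontrivial H]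
    {ψ : AddChar G R} (hψ : ∀ a, ψ a = 1 → a = 0) {f : H →+ G} (hf : Function.Injective f) :
    ψ.compAddMonoidHom f ≠ 1 := by
  obtain ⟨h, hh⟩ := exists_ne (0 : H)
  refine ne_one_iff.mpr ⟨h, fun h1 => hh (hf ?_)⟩
  rw [map_zero]
  exact hψ _ h1

lemma sum_isUnit_eq_neg_one {F : Type*} [Field F] [Fintype F] [DecidableEq F] [IsDomain R]
    {ψ : AddChar F R} (hψ : ψ ≠ 1) : ∑ a : F with IsUnit a, ψ a = -1 := by
  simp only [isUnit_iff_ne_zero, filter_ne', sum_erase_eq_sub (mem_univ _),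
    sum_eq_zero_of_ne_one hψ, map_zero_eq_one, zero_sub]

/-- Through the Chinese remainder theorem, `ψ'` is the `ZMod q`-component of `ψ`, and the factor
`-1` is the sum of its (nontrivial) `ZMod p`-component over `(ZMod p)ˣ`. -/
theorem IsPrimitive.exists_sum_isUnit_mul_cast_eq_neg [IsDomain R] {p q : ℕ} [Fact p.Prime]
    [Fact q.Prime] (hpq : p ≠ q) {ψ : AddChar (ZMod (p * q)) R} (hψ : ψ.IsPrimitive) :
    ∃ ψ' : AddChar (ZMod q) R, ψ' ≠ 1 ∧ ∀ φ : ZMod q → R,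
      ∑ a : ZMod (p * q) with IsUnit a, φ a.cast * ψ a =
        -∑ v : ZMod q with IsUnit v, φ v * ψ' v := by
  have hcop : p.Coprime q := (Nat.coprime_primes Fact.out Fact.out).mpr hpq
  set e := ZMod.chineseRemainder hcop
  set Ψ := ψ.compAddMonoidHom e.symm.toAddMonoidHom
  have hΨ : ∀ y, Ψ y = 1 → y = 0 := fun y hy =>
    e.symm.injective (by simpa using (hψ.zmod_char_eq_one_iff _ _).mp hy)
  have hΨp : Ψ.compAddMonoidHom (.inl (ZMod p) (ZMod q)) ≠ 1 :=
    compAddMonoidHom_ne_one hΨ fun _ _ => congrArg Prod.fst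
  refine ⟨Ψ.compAddMonoidHom (.inr _ _),
    compAddMonoidHom_ne_one hΨ fun _ _ => congrArg Prod.snd, fun φ => ?_⟩
  rw [← neg_one_mul, ← sum_isUnit_eq_neg_one hΨp, ← sum_isUnit_prod_mul]
  refine sum_equiv e.toEquiv (fun a => by simp) fun a _ => ?_
  simp [Ψ, e, ZMod.chineseRemainder_snd]

end AddChar

lemma gaussSum_eq_sum_isUnit {A R : Type*} [CommRing A] [Fintype A] [DecidableEq A] [CommRing R]
    (χ : MulChar A R) (ψ : AddChar A R) :
    ∑ a : A with IsUnit a, χ a * ψ a = gaussSum χ ψ :=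
  sum_filter_of_ne fun a _ ha => not_not.mp fun hu => ha (by rw [χ.map_nonunit hu, zero_mul])

lemma quadraticChar_gaussSum_sq {q : ℕ} [Fact q.Prime] (hq : q % 4 = 1) {R : Type*}
    [CommRing R] [IsDomain R] [CharZero R] {ψ : AddChar (ZMod q) R} (hψ : ψ.IsPrimitive) :
    gaussSum ((quadraticChar (ZMod q)).ringHomComp (Int.castRingHom R)) ψ ^ 2 = q := by
  have hchar : ringChar (ZMod q) ≠ 2 := by
    rw [ZMod.ringChar_zmod_n]
    omega
  have hneg : quadraticChar (ZMod q) (-1) = 1 :=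
    (quadraticChar_one_iff_isSquare (neg_ne_zero.mpr one_ne_zero)).mpr
      (ZMod.exists_sq_eq_neg_one_iff.mpr (by omega))
  rw [gaussSum_sq ((MulChar.ringHomComp_ne_one_iff (RingHom.injective_int _)).mpr
      (quadraticChar_ne_one hchar)) ((quadraticChar_isQuadratic _).comp _) hψ,
    MulChar.ringHomComp_apply, hneg, ZMod.card]
  simp

lemma quadraticChar_eq_neg_one_of_orderOf {F : Type*} [Field F] [Fintype F] [DecidableEq F]
    (hF : ringChar F ≠ 2) {a : F} (ha : orderOf a = Fintype.card F - 1) :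
    quadraticChar F a = -1 := by
  have hodd := FiniteField.odd_card_of_char_ne_two hF
  have hcard : 1 < Fintype.card F := Fintype.one_lt_card
  have ha0 : a ≠ 0 := (orderOf_pos_iff.mp (by omega)).isUnit.ne_zero
  rw [quadraticChar_neg_one_iff_not_isSquare, FiniteField.isSquare_iff hF ha0]
  exact pow_ne_one_of_lt_orderOf (by omega) (by omega)

section DingHelleseth

variable {p q g x : ℕ}

lemma injOn_DHD0 [Fact p.Prime] [Fact q.Prime] (hgcd : Nat.gcd (p - 1) (q - 1) = 2)
    (hgp : orderOf (g : ZMod p) = p - 1) (hgq : orderOf (g : ZMod q) = q - 1)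
    (hxp : (x : ZMod p) = (g : ZMod p)) (hxq : (x : ZMod q) = 1) :
    Set.InjOn (fun ti : ℕ × ℕ => (g : ZMod (p * q)) ^ (2 * ti.1) * (x : ZMod (p * q)) ^ ti.2)
      (range ((p - 1) * (q - 1) / 4) ×ˢ range 2 : Finset (ℕ × ℕ)) := by
  rintro ⟨t, i⟩ hti ⟨t', i'⟩ hti' h
  simp only [coe_product, coe_range, Set.mem_prod, Set.mem_Iio] at hti hti'
  have hmodp := congrArg (ZMod.castHom (dvd_mul_right p q) (ZMod p)) h
  have hmodq := congrArg (ZMod.castHom (dvd_mul_left q p) (ZMod q)) h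
  simp only [map_mul, map_pow, map_natCast, hxp, hxq, one_pow, mul_one, ← pow_add] at hmodp hmodq
  have hgp' := ZMod.isOfFinOrder_of_orderOf_eq_sub_one (Nat.Prime.one_lt Fact.out) hgp
  have hgq' := ZMod.isOfFinOrder_of_orderOf_eq_sub_one (Nat.Prime.one_lt Fact.out) hgq
  rw [hgp'.pow_eq_pow_iff_modEq, hgp] at hmodp
  rw [hgq'.pow_eq_pow_iff_modEq, hgq] at hmodq
  obtain ⟨rfl, rfl⟩ :=
    Nat.eq_and_eq_of_modEq_of_gcd_eq_two hgcd hti.1 hti'.1 hti.2 hti'.2 hmodp hmodq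
  rfl

lemma isUnit_of_mem_DHD0 (hg : IsUnit (g : ZMod (p * q))) (hx : IsUnit (x : ZMod (p * q)))
    {a : ZMod (p * q)} (ha : a ∈ DHD0 p q g x) : IsUnit a := by
  obtain ⟨⟨t, i⟩, -, rfl⟩ := mem_image.mp ha
  exact (hg.pow _).mul (hx.pow _)

lemma quadraticChar_cast_of_mem_DHD0 [Fact q.Prime] (hg : (g : ZMod q) ≠ 0)
    (hxq : (x : ZMod q) = 1) {a : ZMod (p * q)} (ha : a ∈ DHD0 p q g x) :
    quadraticChar (ZMod q) a.cast = 1 := by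
  obtain ⟨⟨t, i⟩, -, rfl⟩ := mem_image.mp ha
  rw [← ZMod.castHom_apply (h := dvd_mul_left q p), map_mul, map_pow, map_pow, map_natCast,
    map_natCast, hxq, one_pow, mul_one, pow_mul', quadraticChar_sq_one' (pow_ne_zero _ hg)]

lemma quadraticChar_cast_of_mem_DHD1 [Fact q.Prime] (hq2 : q ≠ 2)
    (hgq : orderOf (g : ZMod q) = q - 1) (hxq : (x : ZMod q) = 1) {a : ZMod (p * q)}
    (ha : a ∈ DHD1 p q g x) : quadraticChar (ZMod q) a.cast = -1 := by
  obtain ⟨d, hd, rfl⟩ := mem_image.mp ha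
  have hg : quadraticChar (ZMod q) g = -1 :=
    quadraticChar_eq_neg_one_of_orderOf (by rwa [ZMod.ringChar_zmod_n]) (by rwa [ZMod.card])
  have hg0 : (g : ZMod q) ≠ 0 := fun h0 => by simp [h0] at hg
  rw [← ZMod.castHom_apply (h := dvd_mul_left q p), map_mul, map_natCast, map_mul,
    ZMod.castHom_apply, hg, quadraticChar_cast_of_mem_DHD0 hg0 hxq hd, mul_one]

lemma disjoint_DHD0_DHD1 [Fact q.Prime] (hq2 : q ≠ 2) (hgq : orderOf (g : ZMod q) = q - 1)
    (hxq : (x : ZMod q) = 1) : Disjoint (DHD0 p q g x) (DHD1 p q g x) := by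
  have hg0 : (g : ZMod q) ≠ 0 :=
    (ZMod.isOfFinOrder_of_orderOf_eq_sub_one (Nat.Prime.one_lt Fact.out) hgq).isUnit.ne_zero
  refine disjoint_left.mpr fun a h0 h1 => ?_
  have := (quadraticChar_cast_of_mem_DHD0 hg0 hxq h0).symm.trans
    (quadraticChar_cast_of_mem_DHD1 hq2 hgq hxq h1)
  norm_num at this

lemma DHD0_union_DHD1 [Fact p.Prime] [Fact q.Prime] (hpq : p ≠ q)
    (hgcd : Nat.gcd (p - 1) (q - 1) = 2)
    (hgp : orderOf (g : ZMod p) = p - 1) (hgq : orderOf (g : ZMod q) = q - 1)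
    (hxp : (x : ZMod p) = (g : ZMod p)) (hxq : (x : ZMod q) = 1) :
    DHD0 p q g x ∪ DHD1 p q g x = univ.filter fun a : ZMod (p * q) => IsUnit a := by
  have hp : p.Prime := Fact.out
  have hq : q.Prime := Fact.out
  have hcop : p.Coprime q := (Nat.coprime_primes hp hq).mpr hpq
  have hgp' := (ZMod.isOfFinOrder_of_orderOf_eq_sub_one hp.one_lt hgp).isUnit
  have hgq' := (ZMod.isOfFinOrder_of_orderOf_eq_sub_one hq.one_lt hgq).isUnit
  have hg : IsUnit (g : ZMod (p * q)) := (ZMod.isUnit_natCast_mul_iff hcop g).mpr ⟨hgp', hgq'⟩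
  have hx : IsUnit (x : ZMod (p * q)) :=
    (ZMod.isUnit_natCast_mul_iff hcop x).mpr ⟨hxp ▸ hgp', hxq ▸ isUnit_one⟩
  refine eq_of_subset_of_card_le (union_subset (fun a (ha : a ∈ DHD0 p q g x) => ?_)
    (fun a (ha : a ∈ DHD1 p q g x) => ?_)) ?_
  · exact mem_filter.mpr ⟨mem_univ _, isUnit_of_mem_DHD0 hg hx ha⟩
  · obtain ⟨d, hd, rfl⟩ := mem_image.mp ha
    exact mem_filter.mpr ⟨mem_univ _, hg.mul (isUnit_of_mem_DHD0 hg hx hd)⟩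
  have h4 : 4 ∣ (p - 1) * (q - 1) :=
    Nat.mul_dvd_mul (hgcd ▸ Nat.gcd_dvd_left _ _) (hgcd ▸ Nat.gcd_dvd_right _ _)
  have hq2 : q ≠ 2 := by
    rintro rfl
    simp at hgcd
  rw [ZMod.card_filter_isUnit, Nat.totient_mul hcop, Nat.totient_prime hp, Nat.totient_prime hq,
    card_union_of_disjoint (disjoint_DHD0_DHD1 hq2 hgq hxq), DHD1,
    card_image_of_injective _ hg.mul_right_injective, DHD0,
    card_image_of_injOn (injOn_DHD0 hgcd hgp hgq hxp hxq), card_product, card_range, card_range]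
  omega

lemma sum_DHD0_sub_sum_DHD1 {R : Type*} [CommRing R] [Fact p.Prime] [Fact q.Prime] (hpq : p ≠ q)
    (hgcd : Nat.gcd (p - 1) (q - 1) = 2)
    (hgp : orderOf (g : ZMod p) = p - 1) (hgq : orderOf (g : ZMod q) = q - 1)
    (hxp : (x : ZMod p) = (g : ZMod p)) (hxq : (x : ZMod q) = 1) (f : ZMod (p * q) → R) :
    ∑ a ∈ DHD0 p q g x, f a - ∑ a ∈ DHD1 p q g x, f a =
      ∑ a : ZMod (p * q) with IsUnit a, (quadraticChar (ZMod q) a.cast : R) * f a := by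
  have hq2 : q ≠ 2 := by
    rintro rfl
    simp at hgcd
  have hg0 : (g : ZMod q) ≠ 0 :=
    (ZMod.isOfFinOrder_of_orderOf_eq_sub_one (Nat.Prime.one_lt Fact.out) hgq).isUnit.ne_zero
  rw [← DHD0_union_DHD1 hpq hgcd hgp hgq hxp hxq, sum_union (disjoint_DHD0_DHD1 hq2 hgq hxq),
    sub_eq_add_neg, ← sum_neg_distrib]
  congr 1 <;> refine sum_congr rfl fun a ha => ?_
  · rw [quadraticChar_cast_of_mem_DHD0 hg0 hxq ha, Int.cast_one, one_mul]
  · rw [quadraticChar_cast_of_mem_DHD1 hq2 hgq hxq ha, Int.cast_neg, Int.cast_one, neg_one_mul]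

end DingHelleseth

theorem stmt6_general (p q g x : ℕ) (hp : Nat.Prime p) (hq : Nat.Prime q)
    (hpq : p < q)
    (hgcd : Nat.gcd (p - 1) (q - 1) = 2)
    (hgp : orderOf (g : ZMod p) = p - 1) (hgq : orderOf (g : ZMod q) = q - 1)
    (hxp : (x : ZMod p) = (g : ZMod p)) (hxq : (x : ZMod q) = 1) (h1 : q % 4 = 1) :
    DHeta (p * q) (DHD0 p q g x) * DHeta (p * q) (DHD1 p q g x) =
      -(((q : ℂ) - 1) / 4) := by
  have := Fact.mk hp
  have := Fact.mk hq
  have : NeZero (p * q) := ⟨(Nat.mul_pos hp.pos hq.pos).ne'⟩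
  have hξ : IsPrimitiveRoot (DHxi (p * q)) (p * q) := Complex.isPrimitiveRoot_exp _ NeZero.out
  obtain ⟨ψ, hψ, hsum⟩ :=
    (AddChar.zmodChar_primitive_of_primitive_root _ hξ).exists_sum_isUnit_mul_cast_eq_neg hpq.ne
  set χ := (quadraticChar (ZMod q)).ringHomComp (Int.castRingHom ℂ)
  set η₀ := DHeta (p * q) (DHD0 p q g x) with hη₀
  set η₁ := DHeta (p * q) (DHD1 p q g x) with hη₁
  have hadd : η₀ + η₁ = 1 := by
    rw [hη₀, hη₁, DHeta, DHeta, ← sum_union (disjoint_DHD0_DHD1 (by omega) hgq hxq),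
      DHD0_union_DHD1 hpq.ne hgcd hgp hgq hxp hxq]
    have h := hsum 1
    simp only [Pi.one_apply, one_mul, AddChar.sum_isUnit_eq_neg_one hψ, neg_neg] at h
    exact h
  have hsub : η₀ - η₁ = -gaussSum χ ψ := by
    rw [hη₀, hη₁, DHeta, DHeta, sum_DHD0_sub_sum_DHD1 hpq.ne hgcd hgp hgq hxp hxq,
      ← gaussSum_eq_sum_isUnit]
    exact hsum χ
  have hgauss := quadraticChar_gaussSum_sq h1 (AddChar.IsPrimitive.of_ne_one hψ)
  linear_combination (η₀ + η₁ + 1) / 4 * hadd - (η₀ - η₁ - gaussSum χ ψ) / 4 * hsub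
    - 1 / 4 * hgauss

theorem stmt6 (p q g x : ℕ) (hp : Nat.Prime p) (hq : Nat.Prime q)
    (hpo : Odd p) (hqo : Odd q) (hpq : p < q)
    (hgcd : Nat.gcd (p - 1) (q - 1) = 2)
    (hgp : orderOf (g : ZMod p) = p - 1) (hgq : orderOf (g : ZMod q) = q - 1)
    (hxp : (x : ZMod p) = (g : ZMod p)) (hxq : (x : ZMod q) = 1) (h1 : q % 4 = 1) :
    DHeta (p * q) (DHD0 p q g x) * DHeta (p * q) (DHD1 p q g x) =
      -(((q : ℂ) - 1) / 4) :=
  stmt6_general p q g x hp hq hpq hgcd hgp hgq hxp hxq h1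
end

section
/- If q ≡ 3 (mod 4), then the generalized Gauss periods of order 2 modulo N = pq satisfy η₀^{(N)} · η₁^{(N)} = (q+1)/4. -/
open Finset

lemma DHxi_prim {N : ℕ} (hN : N ≠ 0) : IsPrimitiveRoot (DHxi N) N :=
  Complex.isPrimitiveRoot_exp N hN

lemma DHxi_pow_self {N : ℕ} (hN : N ≠ 0) : DHxi N ^ N = 1 := (DHxi_prim hN).pow_eq_one

lemma DHxi_pow_natCast {N : ℕ} [NeZero N] (n : ℕ) :
    DHxi N ^ ((n : ZMod N)).val = DHxi N ^ n := by
  rw [ZMod.val_natCast]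
  exact (pow_eq_pow_mod n (DHxi_pow_self (NeZero.ne N))).symm

lemma DHxi_pow_q {p q : ℕ} (hp : p ≠ 0) (hq : q ≠ 0) : DHxi (p * q) ^ q = DHxi p := by
  unfold DHxi
  rw [← Complex.exp_nat_mul]
  congr 1
  have hp' : (p : ℂ) ≠ 0 := Nat.cast_ne_zero.mpr hp
  have hq' : (q : ℂ) ≠ 0 := Nat.cast_ne_zero.mpr hq
  push_cast
  field_simp

lemma DHxi_pow_p {p q : ℕ} (hp : p ≠ 0) (hq : q ≠ 0) : DHxi (p * q) ^ p = DHxi q := by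
  rw [show p * q = q * p from mul_comm p q]; exact DHxi_pow_q hq hp


/-- reduction mod q -/
def DHrq (p q : ℕ) : ZMod (p * q) →+* ZMod q := ZMod.castHom (dvd_mul_left q p) (ZMod q)
def DHrp (p q : ℕ) : ZMod (p * q) →+* ZMod p := ZMod.castHom (dvd_mul_right p q) (ZMod p)

lemma DHrq_apply {p q : ℕ} [NeZero (p * q)] (a : ZMod (p * q)) :
    DHrq p q a = ((a.val : ℕ) : ZMod q) := by
  rw [DHrq, ZMod.castHom_apply, ZMod.natCast_val]

lemma DHrp_apply {p q : ℕ} [NeZero (p * q)] (a : ZMod (p * q)) :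
    DHrp p q a = ((a.val : ℕ) : ZMod p) := by
  rw [DHrp, ZMod.castHom_apply, ZMod.natCast_val]

lemma DHcrt_inj {p q : ℕ} (hp : p.Prime) (hq : q.Prime) (hne : p ≠ q)
    {a b : ZMod (p * q)} (h1 : DHrp p q a = DHrp p q b) (h2 : DHrq p q a = DHrq p q b) :
    a = b := by
  haveI : NeZero (p * q) := ⟨Nat.mul_ne_zero hp.ne_zero hq.ne_zero⟩
  rw [DHrp_apply a, DHrp_apply b] at h1
  rw [DHrq_apply a, DHrq_apply b] at h2
  have h1' : a.val ≡ b.val [MOD p] := (ZMod.natCast_eq_natCast_iff _ _ _).mp h1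
  have h2' : a.val ≡ b.val [MOD q] := (ZMod.natCast_eq_natCast_iff _ _ _).mp h2
  have hcop : Nat.Coprime p q := (Nat.coprime_primes hp hq).mpr hne
  have h3 : a.val ≡ b.val [MOD p * q] :=
    (Nat.modEq_and_modEq_iff_modEq_mul hcop).mp ⟨h1', h2'⟩
  have := h3.eq_of_lt_of_lt (ZMod.val_lt a) (ZMod.val_lt b)
  exact ZMod.val_injective _ this

lemma DHisUnit_iff {p q : ℕ} (hp : p.Prime) (hq : q.Prime) (a : ZMod (p * q)) :
    IsUnit a ↔ IsUnit (DHrp p q a) ∧ IsUnit (DHrq p q a) := by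
  haveI : NeZero (p * q) := ⟨Nat.mul_ne_zero hp.ne_zero hq.ne_zero⟩
  constructor
  · exact fun h => ⟨h.map _, h.map _⟩
  · rintro ⟨h1, h2⟩
    rw [DHrp_apply a] at h1
    rw [DHrq_apply a] at h2
    have h1' : a.val.Coprime p := (ZMod.isUnit_iff_coprime _ _).mp h1
    have h2' : a.val.Coprime q := (ZMod.isUnit_iff_coprime _ _).mp h2
    have : IsUnit ((a.val : ℕ) : ZMod (p * q)) :=
      (ZMod.isUnit_iff_coprime _ _).mpr (Nat.Coprime.mul_right h1' h2')
    rwa [ZMod.natCast_zmod_val] at this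


lemma DHgunit {r gn : ℕ} [hF : Fact r.Prime] (hg : orderOf (gn : ZMod r) = r - 1) :
    IsUnit (gn : ZMod r) := by
  apply IsUnit.of_pow_eq_one (n := r - 1)
  · rw [← hg]; exact pow_orderOf_eq_one _
  · have := hF.out.two_le; omega

lemma DHpow_congr {r gn : ℕ} [Fact r.Prime] (hg : orderOf (gn : ZMod r) = r - 1)
    {m n : ℕ} (h : m ≡ n [MOD r - 1]) : (gn : ZMod r) ^ m = (gn : ZMod r) ^ n := by
  have hgu := DHgunit hg
  have hord : orderOf hgu.unit = r - 1 := by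
    rw [← orderOf_units, hgu.unit_spec]; exact hg
  have : hgu.unit ^ m = hgu.unit ^ n := pow_eq_pow_iff_modEq.mpr (by rw [hord]; exact h)
  calc (gn : ZMod r) ^ m = ((hgu.unit ^ m : (ZMod r)ˣ) : ZMod r) := by
        rw [Units.val_pow_eq_pow_val, hgu.unit_spec]
    _ = ((hgu.unit ^ n : (ZMod r)ˣ) : ZMod r) := by rw [this]
    _ = (gn : ZMod r) ^ n := by rw [Units.val_pow_eq_pow_val, hgu.unit_spec]

lemma DHsurj {r gn : ℕ} [hF : Fact r.Prime] (hg : orderOf (gn : ZMod r) = r - 1)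
    {u : ZMod r} (hu : u ≠ 0) : ∃ k : ℕ, (gn : ZMod r) ^ k = u := by
  have hgu := DHgunit hg
  have hord : orderOf hgu.unit = r - 1 := by
    rw [← orderOf_units, hgu.unit_spec]; exact hg
  have hcard : Nat.card (ZMod r)ˣ = r - 1 := by
    rw [Nat.card_eq_fintype_card, ZMod.card_units_eq_totient, Nat.totient_prime hF.out]
  have htop : Subgroup.zpowers hgu.unit = ⊤ := by
    apply Subgroup.eq_top_of_card_eq
    rw [Nat.card_zpowers, hord, hcard]
  have huu : IsUnit u := isUnit_iff_ne_zero.mpr hu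
  have : huu.unit ∈ Subgroup.zpowers hgu.unit := by rw [htop]; trivial
  rw [← mem_powers_iff_mem_zpowers] at this
  obtain ⟨k, hk⟩ := this
  simp only [] at hk
  refine ⟨k, ?_⟩
  calc (gn : ZMod r) ^ k = ((hgu.unit ^ k : (ZMod r)ˣ) : ZMod r) := by
        rw [Units.val_pow_eq_pow_val, hgu.unit_spec]
    _ = u := by rw [show hgu.unit ^ k = huu.unit from hk, huu.unit_spec]

lemma DHg_nonsquare {r gn : ℕ} [hF : Fact r.Prime] (hodd : r % 2 = 1)
    (hg : orderOf (gn : ZMod r) = r - 1) : ¬IsSquare (gn : ZMod r) := by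
  have hr3 : 3 ≤ r := by have := hF.out.two_le; omega
  rintro ⟨b, hb⟩
  have hgne : (gn : ZMod r) ≠ 0 := (DHgunit hg).ne_zero
  have hbne : b ≠ 0 := by rintro rfl; rw [mul_zero] at hb; exact hgne hb
  have h1 : (gn : ZMod r) ^ ((r - 1) / 2) = 1 := by
    rw [hb, ← pow_two, ← pow_mul, show 2 * ((r-1)/2) = r - 1 by omega]
    exact ZMod.pow_card_sub_one_eq_one hbne
  have hdvd := orderOf_dvd_of_pow_eq_one h1
  rw [hg] at hdvd
  have := Nat.le_of_dvd (by omega) hdvd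
  omega


lemma DHmem_D0 {p q g x : ℕ} (hp : Nat.Prime p) (hq : Nat.Prime q)
    (hpo : Odd p) (hqo : Odd q) (hpq : p < q)
    (hgcd : Nat.gcd (p - 1) (q - 1) = 2)
    (hgp : orderOf (g : ZMod p) = p - 1) (hgq : orderOf (g : ZMod q) = q - 1)
    (hxp : (x : ZMod p) = (g : ZMod p)) (hxq : (x : ZMod q) = 1)
    (a : ZMod (p * q)) :
    a ∈ DHD0 p q g x ↔ IsUnit a ∧ IsSquare (DHrq p q a) := by
  haveI : Fact p.Prime := ⟨hp⟩
  haveI : Fact q.Prime := ⟨hq⟩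
  haveI : NeZero (p * q) := ⟨Nat.mul_ne_zero hp.ne_zero hq.ne_zero⟩
  have hp3 : 3 ≤ p := by
    have := hp.two_le; have := Nat.odd_iff.mp hpo; omega
  have hq5 : 5 ≤ q := by
    have := Nat.odd_iff.mp hqo; omega
  obtain ⟨P2, hP2⟩ : ∃ k, p - 1 = 2 * k := ⟨(p-1)/2, by have := Nat.odd_iff.mp hpo; omega⟩
  obtain ⟨Q2, hQ2⟩ : ∃ k, q - 1 = 2 * k := ⟨(q-1)/2, by have := Nat.odd_iff.mp hqo; omega⟩
  have hgup : IsUnit (g : ZMod p) := DHgunit hgp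
  have hguq : IsUnit (g : ZMod q) := DHgunit hgq
  have hgu : IsUnit (g : ZMod (p * q)) := by
    rw [DHisUnit_iff hp hq, map_natCast, map_natCast]
    exact ⟨hgup, hguq⟩
  have hxu : IsUnit (x : ZMod (p * q)) := by
    rw [DHisUnit_iff hp hq, map_natCast, map_natCast, hxp, hxq]
    exact ⟨hgup, isUnit_one⟩
  constructor
  · intro ha
    simp only [DHD0, mem_image, mem_product, mem_range, Prod.exists] at ha
    obtain ⟨t, i, ⟨ht, hi⟩, rfl⟩ := ha
    refine ⟨(hgu.pow _).mul (hxu.pow _), ?_⟩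
    rw [map_mul, map_pow, map_pow, map_natCast, map_natCast, hxq, one_pow, mul_one]
    exact ⟨(g : ZMod q) ^ t, by rw [two_mul, pow_add]⟩
  · rintro ⟨ha, hsq⟩
    have hap : IsUnit (DHrp p q a) := ha.map _
    have haq : IsUnit (DHrq p q a) := ha.map _
    obtain ⟨u, hu⟩ := DHsurj hgp hap.ne_zero
    obtain ⟨b, hb⟩ := hsq
    have hbne : b ≠ 0 := by rintro rfl; rw [mul_zero] at hb; exact haq.ne_zero hb
    obtain ⟨w, hw⟩ := DHsurj hgq hbne
    set i := u % 2 with hi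
    have hgcd' : u - i ≡ 2 * w [MOD Nat.gcd (p - 1) (q - 1)] := by
      rw [hgcd]; unfold Nat.ModEq; omega
    obtain ⟨s, hs1, hs2⟩ := Nat.chineseRemainder' hgcd'
    have hseven : s % 2 = 0 := by
      have h2 : (2:ℕ) ∣ (q - 1) := ⟨Q2, hQ2⟩
      have := hs2.of_dvd h2
      unfold Nat.ModEq at this; omega
    have hE4 : (p - 1) * (q - 1) = 4 * (P2 * Q2) := by rw [hP2, hQ2]; ring
    have hEval : (p - 1) * (q - 1) / 4 = P2 * Q2 := by
      rw [hE4]; exact Nat.mul_div_cancel_left _ (by norm_num)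
    have hEpos : 0 < (p - 1) * (q - 1) / 4 := by
      rw [hEval]; exact Nat.mul_pos (by omega) (by omega)
    set E := (p - 1) * (q - 1) / 4 with hEdef
    set t := (s / 2) % E with htdef
    have ht : t < E := Nat.mod_lt _ hEpos
    have key : 2 * t ≡ s [MOD 2 * E] := by
      have h1 : s / 2 % E ≡ s / 2 [MOD E] := Nat.mod_modEq _ _
      have h2 := h1.mul_left' (c := 2)
      rwa [show 2 * (s / 2) = s by omega] at h2
    have hdvdp : (p - 1) ∣ 2 * E := ⟨Q2, by rw [hEval, hP2]; ring⟩
    have hdvdq : (q - 1) ∣ 2 * E := ⟨P2, by rw [hEval, hQ2]; ring⟩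
    have h2tp : 2 * t ≡ u - i [MOD p - 1] := (key.of_dvd hdvdp).trans hs1
    have h2tq : 2 * t ≡ 2 * w [MOD q - 1] := (key.of_dvd hdvdq).trans hs2
    simp only [DHD0, mem_image, mem_product, mem_range, Prod.exists]
    refine ⟨t, i, ⟨ht, Nat.mod_lt u (by norm_num)⟩, ?_⟩
    apply DHcrt_inj hp hq hpq.ne
    · rw [map_mul, map_pow, map_pow, map_natCast, map_natCast, hxp, ← pow_add, ← hu]
      apply DHpow_congr hgp
      have := h2tp.add_right i
      rwa [show u - i + i = u by omega] at this
    · rw [map_mul, map_pow, map_pow, map_natCast, map_natCast, hxq, one_pow, mul_one]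
      have h1 : (g : ZMod q) ^ (2 * t) = (g : ZMod q) ^ (2 * w) := DHpow_congr hgq h2tq
      rw [h1, two_mul, pow_add, hw, ← hb]

lemma DHmem_D1 {p q g x : ℕ} (hp : Nat.Prime p) (hq : Nat.Prime q)
    (hpo : Odd p) (hqo : Odd q) (hpq : p < q)
    (hgcd : Nat.gcd (p - 1) (q - 1) = 2)
    (hgp : orderOf (g : ZMod p) = p - 1) (hgq : orderOf (g : ZMod q) = q - 1)
    (hxp : (x : ZMod p) = (g : ZMod p)) (hxq : (x : ZMod q) = 1)
    (a : ZMod (p * q)) :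
    a ∈ DHD1 p q g x ↔ IsUnit a ∧ ¬IsSquare (DHrq p q a) := by
  haveI : Fact p.Prime := ⟨hp⟩
  haveI : Fact q.Prime := ⟨hq⟩
  haveI : NeZero (p * q) := ⟨Nat.mul_ne_zero hp.ne_zero hq.ne_zero⟩
  have hgup : IsUnit (g : ZMod p) := DHgunit hgp
  have hguq : IsUnit (g : ZMod q) := DHgunit hgq
  have hgu : IsUnit (g : ZMod (p * q)) := by
    rw [DHisUnit_iff hp hq, map_natCast, map_natCast]
    exact ⟨hgup, hguq⟩
  have hgns : ¬IsSquare (g : ZMod q) := DHg_nonsquare (Nat.odd_iff.mp hqo) hgq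
  set χ := quadraticChar (ZMod q) with hχ
  have hχg : χ (g : ZMod q) = -1 := quadraticChar_neg_one_iff_not_isSquare.mpr hgns
  constructor
  · rintro hmem
    simp only [DHD1, mem_image] at hmem
    obtain ⟨d, hd, rfl⟩ := hmem
    rw [DHmem_D0 hp hq hpo hqo hpq hgcd hgp hgq hxp hxq] at hd
    obtain ⟨hdu, hdsq⟩ := hd
    refine ⟨hgu.mul hdu, ?_⟩
    have hdq : IsUnit (DHrq p q d) := hdu.map _
    have h1 : χ (DHrq p q ((g : ZMod (p * q)) * d)) = -1 := by
      rw [map_mul, map_natCast, map_mul, hχg,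
        (quadraticChar_one_iff_isSquare hdq.ne_zero).mpr hdsq]
      ring
    exact quadraticChar_neg_one_iff_not_isSquare.mp h1
  · rintro ⟨ha, hns⟩
    have haq : IsUnit (DHrq p q a) := ha.map _
    have hχa : χ (DHrq p q a) = -1 := quadraticChar_neg_one_iff_not_isSquare.mpr hns
    set d : ZMod (p * q) := ((hgu.unit⁻¹ : (ZMod (p * q))ˣ) : ZMod (p * q)) * a with hd
    have hginv : (g : ZMod (p * q)) * ((hgu.unit⁻¹ : (ZMod (p * q))ˣ) : ZMod (p * q)) = 1 := by
      have h := hgu.unit.mul_inv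
      rwa [hgu.unit_spec] at h
    have hdu : IsUnit d := (Units.isUnit _).mul ha
    have hrq1 : (g : ZMod q) * DHrq p q ((hgu.unit⁻¹ : (ZMod (p * q))ˣ) : ZMod (p * q)) = 1 := by
      rw [← map_natCast (DHrq p q), ← map_mul, hginv, map_one]
    have hχinv : χ (DHrq p q ((hgu.unit⁻¹ : (ZMod (p * q))ˣ) : ZMod (p * q))) = -1 := by
      have := congrArg χ hrq1
      rw [map_mul, hχg, map_one] at this
      linarith [this]
    have hχd : χ (DHrq p q d) = 1 := by
      rw [hd, map_mul, map_mul, hχinv, hχa]; ring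
    have hdsq : IsSquare (DHrq p q d) := by
      have hdq : IsUnit (DHrq p q d) := hdu.map _
      exact (quadraticChar_one_iff_isSquare hdq.ne_zero).mp hχd
    simp only [DHD1, mem_image]
    refine ⟨d, ?_, ?_⟩
    · rw [DHmem_D0 hp hq hpo hqo hpq hgcd hgp hgq hxp hxq]
      exact ⟨hdu, hdsq⟩
    · rw [hd, ← mul_assoc, hginv, one_mul]

open scoped Classical

lemma DHfiber_sum {p q : ℕ} [NeZero (p * q)] (hp : Nat.Prime p) (hq : Nat.Prime q) (hpq : p < q)
    {c : ZMod q} (hc : c ≠ 0) :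
    ∑ a ∈ univ.filter (fun a : ZMod (p * q) => IsUnit a ∧ DHrq p q a = c),
        DHxi (p * q) ^ a.val
      = - DHxi q ^ (c * (p : ZMod q)⁻¹).val := by
  haveI : Fact p.Prime := ⟨hp⟩
  haveI : Fact q.Prime := ⟨hq⟩
  have hppos : 0 < p := hp.pos
  have hqpos : 0 < q := hq.pos
  have hpnz : (p : ZMod q) ≠ 0 := by
    rw [Ne, ZMod.natCast_eq_zero_iff]
    intro h; have := Nat.le_of_dvd hppos h; omega
  set k : ZMod q := c * (p : ZMod q)⁻¹ with hk
  have hknz : k ≠ 0 := mul_ne_zero hc (inv_ne_zero hpnz)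
  set F : Finset (ZMod (p * q)) := univ.filter (fun a => DHrq p q a = c) with hF
  set f : ℕ → ZMod (p * q) := fun m => ((c.val + q * m : ℕ) : ZMod (p * q)) with hf
  -- val of f m
  have hval : ∀ m ∈ Finset.range p, (f m).val = c.val + q * m := by
    intro m hm
    rw [Finset.mem_range] at hm
    apply ZMod.val_cast_of_lt
    have h1 : c.val < q := ZMod.val_lt c
    have h2 : q * (m + 1) ≤ q * p := Nat.mul_le_mul_left q hm
    rw [Nat.mul_succ] at h2
    have h3 : q * p = p * q := mul_comm q p
    omega
  have hinj : ∀ m ∈ Finset.range p, ∀ m' ∈ Finset.range p, f m = f m' → m = m' := by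
    intro m hm m' hm' h
    have := congrArg ZMod.val h
    rw [hval m hm, hval m' hm'] at this
    have h4 : q * m = q * m' := by omega
    exact Nat.eq_of_mul_eq_mul_left hqpos h4
  have hFim : F = (Finset.range p).image f := by
    ext a
    simp only [hF, mem_filter, mem_univ, true_and, mem_image, Finset.mem_range]
    constructor
    · intro ha
      refine ⟨a.val / q, ?_, ?_⟩
      · exact (Nat.div_lt_iff_lt_mul hqpos).mpr (ZMod.val_lt a)
      · have hcv : c.val = a.val % q := by
          rw [DHrq_apply] at ha
          have := congrArg ZMod.val ha
          rw [ZMod.val_natCast] at this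
          omega
        rw [hf]
        simp only []
        rw [hcv, Nat.mod_add_div, ZMod.natCast_zmod_val]
    · rintro ⟨m, hm, rfl⟩
      rw [DHrq_apply, hval m (Finset.mem_range.mpr hm)]
      push_cast
      rw [ZMod.natCast_zmod_val, ZMod.natCast_self, zero_mul, add_zero]
  -- full fiber sum is zero
  have hFsum : ∑ a ∈ F, DHxi (p * q) ^ a.val = 0 := by
    rw [hFim, Finset.sum_image hinj]
    have : ∀ m ∈ Finset.range p, DHxi (p * q) ^ (f m).val
        = DHxi (p * q) ^ c.val * (DHxi p) ^ m := by
      intro m hm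
      rw [hval m hm, pow_add, pow_mul, DHxi_pow_q (by omega) (by omega)]
    rw [Finset.sum_congr rfl this, ← Finset.mul_sum,
      (DHxi_prim (by omega : p ≠ 0)).geom_sum_eq_zero (by
        have := hp.two_le; omega), mul_zero]
  -- the unique non-unit element
  set x₀ : ZMod (p * q) := ((p * k.val : ℕ) : ZMod (p * q)) with hx₀
  have hx₀val : x₀.val = p * k.val := by
    apply ZMod.val_cast_of_lt
    exact (Nat.mul_lt_mul_left hppos).mpr (ZMod.val_lt k)
  have hkvq : (k.val : ZMod q) = k := ZMod.natCast_zmod_val k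
  have hnonunit : F.filter (fun a => ¬IsUnit a) = {x₀} := by
    ext a
    simp only [mem_filter, Finset.mem_singleton, hF, mem_univ, true_and]
    constructor
    · rintro ⟨hrq, hnu⟩
      have hcv : c.val = a.val % q := by
        rw [DHrq_apply] at hrq
        have := congrArg ZMod.val hrq
        rw [ZMod.val_natCast] at this
        omega
      have hcvnz : c.val ≠ 0 := fun h => hc ((ZMod.val_eq_zero c).mp h)
      have hqnd : ¬ q ∣ a.val := by
        intro h
        rw [Nat.dvd_iff_mod_eq_zero] at h
        omega
      have hncop : ¬ (a.val).Coprime (p * q) := by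
        intro h
        apply hnu
        have := (ZMod.isUnit_iff_coprime a.val (p * q)).mpr h
        rwa [ZMod.natCast_zmod_val] at this
      have hpd : p ∣ a.val := by
        by_contra hpd
        exact hncop (Nat.Coprime.mul_right
          ((Nat.Prime.coprime_iff_not_dvd hp).mpr hpd).symm
          ((Nat.Prime.coprime_iff_not_dvd hq).mpr hqnd).symm)
      obtain ⟨s, hs⟩ := hpd
      have hslt : s < q := by
        have := ZMod.val_lt a
        rw [hs] at this
        exact lt_of_mul_lt_mul_left this (Nat.zero_le p)
      have hsk : (s : ZMod q) = k := by
        have hca : c = ((a.val : ℕ) : ZMod q) := by rw [← DHrq_apply a, hrq]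
        rw [hs] at hca
        push_cast at hca
        rw [hk, hca]
        field_simp
      have hskv : s = k.val := by
        have := congrArg ZMod.val hsk
        rwa [ZMod.val_cast_of_lt hslt] at this
      rw [← ZMod.natCast_zmod_val a, hs, hskv]
    · rintro rfl
      refine ⟨?_, ?_⟩
      · rw [DHrq_apply, hx₀val]
        push_cast
        rw [hkvq, hk]
        field_simp
      · intro hu
        rw [← ZMod.natCast_zmod_val x₀, hx₀val] at hu
        have hcop := (ZMod.isUnit_iff_coprime _ _).mp hu
        have : p ∣ Nat.gcd (p * k.val) (p * q) :=
          Nat.dvd_gcd (dvd_mul_right p k.val) (dvd_mul_right p q)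
        rw [Nat.Coprime] at hcop
        rw [hcop] at this
        have := Nat.le_of_dvd one_pos this
        have := hp.two_le
        omega
  -- split
  have hsplit := Finset.sum_filter_add_sum_filter_not F (fun a => IsUnit a)
    (fun a => DHxi (p * q) ^ a.val)
  have hsing : ∑ a ∈ F.filter (fun a => ¬IsUnit a), DHxi (p * q) ^ a.val
      = DHxi q ^ k.val := by
    rw [hnonunit, Finset.sum_singleton, hx₀val, pow_mul, DHxi_pow_p (by omega) (by omega)]
  have hset : univ.filter (fun a : ZMod (p * q) => IsUnit a ∧ DHrq p q a = c)
      = F.filter (fun a => IsUnit a) := by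
    ext a
    simp only [mem_filter, mem_univ, true_and, hF]
    tauto
  rw [hset]
  rw [hFsum, hsing] at hsplit
  linear_combination hsplit

lemma DHeta_filter {p q : ℕ} [NeZero (p * q)] (hp : Nat.Prime p) (hq : Nat.Prime q)
    (hpq : p < q) (S : Finset (ZMod q)) (hS : (0 : ZMod q) ∉ S) :
    DHeta (p * q) (univ.filter (fun a => IsUnit a ∧ DHrq p q a ∈ S))
      = - ∑ c ∈ S, DHxi q ^ ((c * (p : ZMod q)⁻¹).val) := by
  haveI : Fact q.Prime := ⟨hq⟩
  rw [DHeta,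
    ← Finset.sum_fiberwise_of_maps_to (g := DHrq p q)
      (fun a ha => (Finset.mem_filter.mp ha).2.2) (fun a => DHxi (p * q) ^ a.val)]
  rw [← Finset.sum_neg_distrib]
  apply Finset.sum_congr rfl
  intro c hc
  have hc0 : c ≠ 0 := fun h => hS (h ▸ hc)
  rw [← DHfiber_sum hp hq hpq hc0]
  apply Finset.sum_congr _ (fun _ _ => rfl)
  ext a
  simp only [Finset.mem_filter, Finset.mem_univ, true_and]
  constructor
  · rintro ⟨⟨h1, _⟩, h3⟩; exact ⟨h1, h3⟩
  · rintro ⟨h1, h3⟩; exact ⟨⟨h1, h3 ▸ hc⟩, h3⟩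

lemma DHsum_univ_zmod {q : ℕ} [hF : Fact q.Prime] :
    ∑ a : ZMod q, DHxi q ^ a.val = 0 := by
  have hq := hF.out
  have h1 : ∑ a : ZMod q, DHxi q ^ a.val = ∑ i ∈ Finset.range q, DHxi q ^ i := by
    apply Finset.sum_nbij' (i := fun a : ZMod q => a.val) (j := fun i : ℕ => (i : ZMod q))
    · intro a _; exact Finset.mem_range.mpr (ZMod.val_lt a)
    · intro i _; exact Finset.mem_univ _
    · intro a _; exact ZMod.natCast_zmod_val a
    · intro i hi; exact ZMod.val_cast_of_lt (Finset.mem_range.mp hi)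
    · intro a _; rfl
  rw [h1]
  exact (DHxi_prim hq.ne_zero).geom_sum_eq_zero hq.one_lt

lemma DHmem_QR {q : ℕ} [Fact q.Prime] (a : ZMod q) :
    a ∈ DHQR q ↔ a ≠ 0 ∧ IsSquare a := by
  rw [DHQR, Finset.mem_filter]
  simp only [Finset.mem_univ, true_and]
  constructor
  · rintro ⟨h1, b, hb⟩; exact ⟨h1, ⟨b, hb.symm⟩⟩
  · rintro ⟨h1, b, hb⟩; exact ⟨h1, ⟨b, hb.symm⟩⟩

lemma DHmem_QNR {q : ℕ} [Fact q.Prime] (a : ZMod q) :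
    a ∈ DHQNR q ↔ a ≠ 0 ∧ ¬IsSquare a := by
  rw [DHQNR, Finset.mem_filter]
  simp only [Finset.mem_univ, true_and]
  constructor
  · rintro ⟨h1, h2⟩; exact ⟨h1, fun ⟨b, hb⟩ => h2 ⟨b, hb.symm⟩⟩
  · rintro ⟨h1, h2⟩; exact ⟨h1, fun ⟨b, hb⟩ => h2 ⟨b, hb.symm⟩⟩

lemma DHmem_QR_char {q : ℕ} [Fact q.Prime] (hq2 : q ≠ 2) (a : ZMod q) :
    a ∈ DHQR q ↔ quadraticChar (ZMod q) a = 1 := by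
  rw [DHmem_QR]
  constructor
  · rintro ⟨h1, h2⟩; exact (quadraticChar_one_iff_isSquare h1).mpr h2
  · intro h
    have h1 : a ≠ 0 := by
      rintro rfl; rw [quadraticChar_zero] at h; norm_num at h
    exact ⟨h1, (quadraticChar_one_iff_isSquare h1).mp h⟩

lemma DHmem_QNR_char {q : ℕ} [Fact q.Prime] (hq2 : q ≠ 2) (a : ZMod q) :
    a ∈ DHQNR q ↔ quadraticChar (ZMod q) a = -1 := by
  rw [DHmem_QNR]
  constructor
  · rintro ⟨h1, h2⟩; exact quadraticChar_neg_one_iff_not_isSquare.mpr h2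
  · intro h
    have h2 : ¬IsSquare a := quadraticChar_neg_one_iff_not_isSquare.mp h
    exact ⟨fun h0 => h2 (h0 ▸ ⟨0, (mul_zero 0).symm⟩), h2⟩

lemma DHQR_decomp {q : ℕ} [hF : Fact q.Prime] (f : ZMod q → ℂ) :
    ∑ a : ZMod q, f a = f 0 + ((∑ c ∈ DHQR q, f c) + ∑ c ∈ DHQNR q, f c) := by
  rw [← Finset.sum_filter_add_sum_filter_not Finset.univ (fun a : ZMod q => a = 0) f]
  congr 1
  · rw [Finset.filter_eq' Finset.univ (0 : ZMod q), if_pos (Finset.mem_univ _),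
      Finset.sum_singleton]
  · rw [← Finset.sum_filter_add_sum_filter_not
      (Finset.univ.filter (fun a : ZMod q => ¬a = 0)) (fun a => IsSquare a) f]
    congr 1
    · apply Finset.sum_congr _ (fun _ _ => rfl)
      ext a
      simp only [Finset.mem_filter, Finset.mem_univ, true_and, DHmem_QR]
    · apply Finset.sum_congr _ (fun _ _ => rfl)
      ext a
      simp only [Finset.mem_filter, Finset.mem_univ, true_and, DHmem_QNR]

lemma DHtau_prod {q : ℕ} [hF : Fact q.Prime] (h3 : q % 4 = 3) :
    (∑ c ∈ DHQR q, DHxi q ^ c.val) * (∑ c ∈ DHQNR q, DHxi q ^ c.val)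
      = ((q : ℂ) + 1) / 4 := by
  have hq := hF.out
  have hq2 : q ≠ 2 := by omega
  have hringchar : ringChar (ZMod q) ≠ 2 := by rw [ZMod.ringChar_zmod_n]; exact hq2
  set A := ∑ c ∈ DHQR q, DHxi q ^ c.val with hA
  set B := ∑ c ∈ DHQNR q, DHxi q ^ c.val with hB
  -- A + B = -1
  have hAB : A + B = -1 := by
    have h := DHQR_decomp (fun a : ZMod q => DHxi q ^ a.val)
    rw [DHsum_univ_zmod] at h
    simp only [ZMod.val_zero, pow_zero] at h
    rw [hA, hB]
    linear_combination -h
  -- Gauss sum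
  set χ : MulChar (ZMod q) ℂ :=
    (quadraticChar (ZMod q)).ringHomComp (Int.castRingHom ℂ) with hχ
  have hprt := DHxi_prim (N := q) hq.ne_zero
  set ψ : AddChar (ZMod q) ℂ :=
    AddChar.zmodChar q (((IsPrimitiveRoot.iff_def (DHxi q) q).mp hprt).left) with hψ
  have hψprim : ψ.IsPrimitive := AddChar.zmodChar_primitive_of_primitive_root q hprt
  have hχne : χ ≠ 1 :=
    (MulChar.ringHomComp_ne_one_iff (RingHom.injective_int (Int.castRingHom ℂ))).mpr
      (quadraticChar_ne_one hringchar)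
  have hχquad : χ.IsQuadratic := (quadraticChar_isQuadratic (ZMod q)).comp _
  have hGsq : gaussSum χ ψ ^ 2 = χ (-1) * Fintype.card (ZMod q) :=
    gaussSum_sq hχne hχquad hψprim
  have hχneg1 : χ (-1) = -1 := by
    rw [hχ, MulChar.ringHomComp_apply, quadraticChar_neg_one hringchar, ZMod.card,
      ZMod.χ₄_nat_eq_if_mod_four]
    have h2 : q % 2 = 1 := by omega
    simp [h3, h2]
  have hGsq' : gaussSum χ ψ ^ 2 = -(q : ℂ) := by
    rw [hGsq, hχneg1, ZMod.card]; ring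
  -- gaussSum = A - B
  have hG : gaussSum χ ψ = A - B := by
    rw [gaussSum]
    have h := DHQR_decomp (fun a : ZMod q => χ a * ψ a)
    rw [h]
    have h0 : χ (0 : ZMod q) * ψ 0 = 0 := by
      rw [hχ, MulChar.ringHomComp_apply, quadraticChar_zero]
      simp
    rw [h0, zero_add]
    have hQR : ∑ c ∈ DHQR q, χ c * ψ c = A := by
      rw [hA]
      apply Finset.sum_congr rfl
      intro c hc
      have h1 : quadraticChar (ZMod q) c = 1 := (DHmem_QR_char hq2 c).mp hc
      rw [hχ, MulChar.ringHomComp_apply, h1, hψ, AddChar.zmodChar_apply]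
      simp
    have hQNR : ∑ c ∈ DHQNR q, χ c * ψ c = -B := by
      rw [hB, ← Finset.sum_neg_distrib]
      apply Finset.sum_congr rfl
      intro c hc
      have h1 : quadraticChar (ZMod q) c = -1 := (DHmem_QNR_char hq2 c).mp hc
      rw [hχ, MulChar.ringHomComp_apply, h1, hψ, AddChar.zmodChar_apply, map_neg, map_one]
      ring
    rw [hQR, hQNR]
    ring
  rw [hG] at hGsq'
  have h4 : (4 : ℂ) ≠ 0 := by norm_num
  have key : (4 : ℂ) * (A * B) = (A + B) ^ 2 - (A - B) ^ 2 := by ring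
  rw [hAB, hGsq'] at key
  rw [eq_div_iff h4]
  linear_combination key

lemma DHimage_mem {q : ℕ} [Fact q.Prime] {u : ZMod q} (hu : u ≠ 0)
    (S : Finset (ZMod q)) (b : ZMod q) : b ∈ S.image (· * u) ↔ b * u⁻¹ ∈ S := by
  simp only [Finset.mem_image]
  constructor
  · rintro ⟨a, ha, rfl⟩
    rwa [mul_assoc, mul_inv_cancel₀ hu, mul_one]
  · intro h
    exact ⟨b * u⁻¹, h, by field_simp⟩

lemma DHchar_inv {q : ℕ} [Fact q.Prime] {u : ZMod q} (hu : u ≠ 0) :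
    quadraticChar (ZMod q) u⁻¹ = quadraticChar (ZMod q) u := by
  have h1 : quadraticChar (ZMod q) u * quadraticChar (ZMod q) u⁻¹ = 1 := by
    rw [← map_mul, mul_inv_cancel₀ hu]
    exact map_one _
  rcases quadraticChar_dichotomy hu with h | h <;> rw [h] at h1 ⊢ <;> linarith

lemma DHimage_sq {q : ℕ} [Fact q.Prime] (hq2 : q ≠ 2) {u : ZMod q} (hu : u ≠ 0)
    (hsu : IsSquare u) :
    (DHQR q).image (· * u) = DHQR q ∧ (DHQNR q).image (· * u) = DHQNR q := by
  have hχu : quadraticChar (ZMod q) u = 1 := (quadraticChar_one_iff_isSquare hu).mpr hsu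
  constructor <;> ext b <;>
    rw [DHimage_mem hu] <;>
    simp only [DHmem_QR_char hq2, DHmem_QNR_char hq2, map_mul, DHchar_inv hu, hχu, mul_one]

lemma DHimage_nsq {q : ℕ} [Fact q.Prime] (hq2 : q ≠ 2) {u : ZMod q} (hu : u ≠ 0)
    (hsu : ¬IsSquare u) :
    (DHQR q).image (· * u) = DHQNR q ∧ (DHQNR q).image (· * u) = DHQR q := by
  have hχu : quadraticChar (ZMod q) u = -1 := quadraticChar_neg_one_iff_not_isSquare.mpr hsu
  constructor <;> ext b <;>
    rw [DHimage_mem hu] <;>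
    simp only [DHmem_QR_char hq2, DHmem_QNR_char hq2, map_mul, DHchar_inv hu, hχu,
      mul_neg, mul_one] <;>
    constructor <;> intro h <;> linarith

theorem stmt7 (p q g x : ℕ) (hp : Nat.Prime p) (hq : Nat.Prime q)
    (hpo : Odd p) (hqo : Odd q) (hpq : p < q)
    (hgcd : Nat.gcd (p - 1) (q - 1) = 2)
    (hgp : orderOf (g : ZMod p) = p - 1) (hgq : orderOf (g : ZMod q) = q - 1)
    (hxp : (x : ZMod p) = (g : ZMod p)) (hxq : (x : ZMod q) = 1) (h3 : q % 4 = 3) :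
    DHeta (p * q) (DHD0 p q g x) * DHeta (p * q) (DHD1 p q g x) =
      ((q : ℂ) + 1) / 4 := by
  haveI instp : Fact p.Prime := ⟨hp⟩
  haveI instq : Fact q.Prime := ⟨hq⟩
  haveI : NeZero (p * q) := ⟨Nat.mul_ne_zero hp.ne_zero hq.ne_zero⟩
  have hq2 : q ≠ 2 := by omega
  have hpnz : (p : ZMod q) ≠ 0 := by
    rw [Ne, ZMod.natCast_eq_zero_iff]
    intro h
    have := Nat.le_of_dvd hp.pos h
    omega
  have hinvnz : ((p : ZMod q))⁻¹ ≠ 0 := inv_ne_zero hpnz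
  have hQR0 : (0 : ZMod q) ∉ DHQR q := by rw [DHmem_QR]; tauto
  have hQNR0 : (0 : ZMod q) ∉ DHQNR q := by rw [DHmem_QNR]; tauto
  have hD0 : DHD0 p q g x
      = univ.filter (fun a : ZMod (p * q) => IsUnit a ∧ DHrq p q a ∈ DHQR q) := by
    ext a
    rw [DHmem_D0 hp hq hpo hqo hpq hgcd hgp hgq hxp hxq, Finset.mem_filter]
    simp only [Finset.mem_univ, true_and, DHmem_QR]
    constructor
    · rintro ⟨h1, h2⟩; exact ⟨h1, (h1.map (DHrq p q)).ne_zero, h2⟩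
    · rintro ⟨h1, _, h2⟩; exact ⟨h1, h2⟩
  have hD1 : DHD1 p q g x
      = univ.filter (fun a : ZMod (p * q) => IsUnit a ∧ DHrq p q a ∈ DHQNR q) := by
    ext a
    rw [DHmem_D1 hp hq hpo hqo hpq hgcd hgp hgq hxp hxq, Finset.mem_filter]
    simp only [Finset.mem_univ, true_and, DHmem_QNR]
    constructor
    · rintro ⟨h1, h2⟩; exact ⟨h1, (h1.map (DHrq p q)).ne_zero, h2⟩
    · rintro ⟨h1, _, h2⟩; exact ⟨h1, h2⟩
  rw [hD0, hD1, DHeta_filter hp hq hpq _ hQR0, DHeta_filter hp hq hpq _ hQNR0, neg_mul_neg]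
  have hrei : ∀ S : Finset (ZMod q),
      ∑ c ∈ S, DHxi q ^ ((c * (p : ZMod q)⁻¹).val)
        = ∑ d ∈ S.image (· * (p : ZMod q)⁻¹), DHxi q ^ d.val := by
    intro S
    rw [Finset.sum_image]
    intro a _ b _ h
    exact mul_right_cancel₀ hinvnz h
  rw [hrei, hrei]
  by_cases hsq : IsSquare ((p : ZMod q))⁻¹
  · rw [(DHimage_sq hq2 hinvnz hsq).1, (DHimage_sq hq2 hinvnz hsq).2]
    exact DHtau_prod h3
  · rw [(DHimage_nsq hq2 hinvnz hsq).1, (DHimage_nsq hq2 hinvnz hsq).2, mul_comm]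
    exact DHtau_prod h3
end

section
/- For the first Ding–Helleseth sequence and for j ∈ {0,1}, every a ∈ D_j satisfies S(ξ_N^a) = −η_j^{(N)}. -/
open Finset

/-!
By the Chinese remainder theorem and `gcd (p - 1) (q - 1) = 2`, the class `D₀` (resp. `D₁`)
consists of the residues that are nonzero mod `p` and whose residue mod `q` is a nonzero square
(resp. a non-square). So for `a ∈ D₀ ∪ D₁`, multiplication by `a` fixes `P` and maps `D₁` onto `D₁`
if `a ∈ D₀` and onto `D₀` if `a ∈ D₁`. Reindexing `S(ξ^a) = ∑_{c ∈ D₁ ∪ P} ξ^{ac}` then gives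
`S(ξ^a) = η(a D₁) + ∑_{c ∈ P} ξ^c = η(a D₁) - 1`, while summing `ξ^c` over
`ℤ_N = D₀ ∪ D₁ ∪ {0} ∪ P ∪ Q` gives `η₀ + η₁ = 1`.
-/

theorem Nat.exists_two_mul_add_modEq_s8 {P Q : ℕ} (hco : P.Coprime Q) (hP : 0 < P) (hQ : 0 < Q)
    (a b : ℕ) : ∃ t < P * Q, ∃ i < 2, 2 * t + i ≡ a [MOD 2 * P] ∧ t ≡ b [MOD Q] := by
  obtain ⟨t, htP, htQ⟩ := Nat.chineseRemainder hco (a / 2) b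
  refine ⟨t % (P * Q), Nat.mod_lt _ (by positivity), a % 2, Nat.mod_lt _ two_pos, ?_,
    ((Nat.mod_modEq t _).of_mul_left P).trans htQ⟩
  have htP' := ((((Nat.mod_modEq t _).of_mul_right Q).trans htP).mul_left' 2).add_right (a % 2)
  rwa [Nat.div_add_mod] at htP'

theorem IsPrimitiveRoot.pow_eq_pow_of_modEq {M : Type*} [CommMonoid M] {ζ : M} {k a b : ℕ}
    (h : IsPrimitiveRoot ζ k) (hab : a ≡ b [MOD k]) : ζ ^ a = ζ ^ b := by
  rw [← pow_mod_orderOf ζ a, ← pow_mod_orderOf ζ b, ← h.eq_orderOf, hab]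

theorem IsPrimitiveRoot.pow_val_mul {M : Type*} [CommMonoid M] {N : ℕ} {ζ : M}
    (h : IsPrimitiveRoot ζ N) (a b : ZMod N) : ζ ^ (a * b).val = (ζ ^ a.val) ^ b.val := by
  rw [← pow_mul, ZMod.val_mul]
  exact h.pow_eq_pow_of_modEq (Nat.mod_modEq _ _)

theorem ZMod.exists_pow_eq_of_isPrimitiveRoot {p : ℕ} [Fact p.Prime] {g u : ZMod p}
    (hg : IsPrimitiveRoot g (p - 1)) (hu : u ≠ 0) : ∃ a, g ^ a = u := by
  have : NeZero (p - 1) := ⟨by have := (Fact.out : p.Prime).two_le; omega⟩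
  obtain ⟨a, -, ha⟩ := hg.eq_pow_of_pow_eq_one (ZMod.pow_card_sub_one_eq_one hu)
  exact ⟨a, ha⟩

theorem ZMod.sum_range_natCast {M : Type*} [AddCommMonoid M] {N : ℕ} [NeZero N]
    (f : ZMod N → M) : ∑ i ∈ range N, f i = ∑ c, f c :=
  sum_nbij' (↑) ZMod.val (by simp) (by simp [ZMod.val_lt])
    (fun i hi => ZMod.val_natCast_of_lt (mem_range.1 hi)) (by simp) (by simp)

theorem IsPrimitiveRoot.sum_range_ite_mem_mul_pow {R : Type*} [CommSemiring R] {N : ℕ} [NeZero N]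
    {ζ : R} (h : IsPrimitiveRoot ζ N)
    {a : ZMod N} (ha : IsUnit a) (T : Finset (ZMod N)) :
    ∑ i ∈ range N, ((if (i : ZMod N) ∈ T then 1 else 0 : ℕ) : R) * (ζ ^ a.val) ^ i =
      ∑ c ∈ T.image (a * ·), ζ ^ c.val := by
  rw [sum_image fun c _ d _ hcd => ha.mul_right_injective hcd, ← univ_inter T, ← sum_ite_mem,
    ← ZMod.sum_range_natCast]
  refine sum_congr rfl fun i hi => ?_
  rw [h.pow_val_mul, ZMod.val_natCast_of_lt (mem_range.1 hi)]
  by_cases hiT : (i : ZMod N) ∈ T <;> simp [hiT]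

section

variable {R : Type*} [CommRing R] [IsDomain R] {N : ℕ} {ζ : R}

theorem IsPrimitiveRoot.sum_pow_val_eq_zero [NeZero N] (h : IsPrimitiveRoot ζ N) (hN : 1 < N) :
    ∑ c : ZMod N, ζ ^ c.val = 0 := by
  rw [← ZMod.sum_range_natCast, ← h.geom_sum_eq_zero hN]
  exact sum_congr rfl fun i hi => by rw [ZMod.val_natCast_of_lt (mem_range.1 hi)]

variable {d e : ℕ} [NeZero N]

theorem Nat.mul_lt_mul_of_mem_Icc_sub_one (hd : 0 < d) {k : ℕ} (hk : k ∈ Icc 1 (e - 1)) :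
    k * d < d * e := by
  rw [mem_Icc] at hk
  rw [mul_comm d]
  exact Nat.mul_lt_mul_of_pos_right (by omega) hd

theorem ZMod.mem_image_Icc_mul_iff (hN : d * e = N) (c : ZMod N) :
    c ∈ (Icc 1 (e - 1)).image (fun k => ((k * d : ℕ) : ZMod N)) ↔ c ≠ 0 ∧ d ∣ c.val := by
  have hd : 0 < d := Nat.pos_of_ne_zero (left_ne_zero_of_mul (hN ▸ NeZero.ne N))
  constructor
  · intro hc
    obtain ⟨k, hk, rfl⟩ := mem_image.1 hc
    rw [Ne, ← ZMod.val_eq_zero,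
      ZMod.val_natCast_of_lt (hN ▸ Nat.mul_lt_mul_of_mem_Icc_sub_one hd hk)]
    have hk0 : k ≠ 0 := by rw [mem_Icc] at hk; omega
    exact ⟨Nat.mul_ne_zero hk0 hd.ne', dvd_mul_left d k⟩
  · rintro ⟨hc, k, hk⟩
    have hlt : d * k < d * e := hN ▸ hk ▸ ZMod.val_lt c
    have hk0 : k ≠ 0 := by rintro rfl; exact hc (ZMod.val_eq_zero _ |>.1 (by simpa using hk))
    refine mem_image.2 ⟨k, mem_Icc.2 ⟨by omega, ?_⟩, ?_⟩
    · have := lt_of_mul_lt_mul_left hlt hd.le; omega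
    · rw [mul_comm, ← hk, ZMod.natCast_zmod_val]

theorem IsPrimitiveRoot.sum_pow_val_image_Icc_mul (h : IsPrimitiveRoot ζ N) (hN : d * e = N)
    (he : 1 < e) :
    ∑ c ∈ (Icc 1 (e - 1)).image (fun k => ((k * d : ℕ) : ZMod N)), ζ ^ c.val = -1 := by
  have hgeom := (h.pow (NeZero.pos N) hN.symm).geom_sum_eq_zero he
  rw [sum_range_eq_add_Ico _ (by omega), pow_zero,
    show Ico 1 e = Icc 1 (e - 1) by ext; simp; omega] at hgeom
  have hd : 0 < d := Nat.pos_of_ne_zero (left_ne_zero_of_mul (hN ▸ NeZero.ne N))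
  have hval : ∀ k ∈ Icc 1 (e - 1), ((k * d : ℕ) : ZMod N).val = k * d := fun k hk =>
    ZMod.val_natCast_of_lt (hN ▸ Nat.mul_lt_mul_of_mem_Icc_sub_one hd hk)
  rw [sum_image fun k hk l hl hkl => Nat.eq_of_mul_eq_mul_right hd <| by
    rw [← hval k hk, ← hval l hl, hkl], eq_neg_iff_add_eq_zero, add_comm, ← hgeom]
  exact congrArg _ (sum_congr rfl fun k hk => by rw [hval k hk, pow_mul'])

end

namespace DingHelleseth

variable {p q g x : ℕ}

abbrev castLeft (p q : ℕ) : ZMod (p * q) →+* ZMod p := ZMod.castHom (dvd_mul_right p q) (ZMod p)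

abbrev castRight (p q : ℕ) : ZMod (p * q) →+* ZMod q := ZMod.castHom (dvd_mul_left q p) (ZMod q)

theorem chineseRemainder_apply (hpq : p.Coprime q) (c : ZMod (p * q)) :
    ZMod.chineseRemainder hpq c = (castLeft p q c, castRight p q c) :=
  Prod.ext (Prod.fst_zmod_cast c) (Prod.snd_zmod_cast c)

theorem eq_iff_cast_eq (hpq : p.Coprime q) {a b : ZMod (p * q)} :
    a = b ↔ castLeft p q a = castLeft p q b ∧ castRight p q a = castRight p q b := by
  rw [← (ZMod.chineseRemainder hpq).injective.eq_iff, chineseRemainder_apply,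
    chineseRemainder_apply, Prod.mk.injEq]

theorem isUnit_iff [Fact p.Prime] [Fact q.Prime] (hpq : p.Coprime q) {c : ZMod (p * q)} :
    IsUnit c ↔ castLeft p q c ≠ 0 ∧ castRight p q c ≠ 0 := by
  rw [← MulEquiv.isUnit_map (ZMod.chineseRemainder hpq), chineseRemainder_apply,
    Prod.isUnit_iff, isUnit_iff_ne_zero, isUnit_iff_ne_zero]

section

variable [NeZero (p * q)]

theorem castLeft_eq_zero_iff (c : ZMod (p * q)) : castLeft p q c = 0 ↔ p ∣ c.val := by
  rw [ZMod.castHom_apply, ZMod.cast_eq_val, ZMod.natCast_eq_zero_iff]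

theorem castRight_eq_zero_iff (c : ZMod (p * q)) : castRight p q c = 0 ↔ q ∣ c.val := by
  rw [ZMod.castHom_apply, ZMod.cast_eq_val, ZMod.natCast_eq_zero_iff]

theorem mem_P_iff (c : ZMod (p * q)) : c ∈ DHP p q ↔ c ≠ 0 ∧ castLeft p q c = 0 := by
  rw [castLeft_eq_zero_iff]
  exact ZMod.mem_image_Icc_mul_iff rfl c

theorem mem_Q_iff (c : ZMod (p * q)) : c ∈ DHQ p q ↔ c ≠ 0 ∧ castRight p q c = 0 := by
  rw [castRight_eq_zero_iff]
  exact ZMod.mem_image_Icc_mul_iff (mul_comm q p) c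

theorem isPrimitiveRoot_DHxi : IsPrimitiveRoot (DHxi (p * q)) (p * q) :=
  Complex.isPrimitiveRoot_exp _ (NeZero.ne _)

theorem sum_P (hq : 1 < q) : ∑ c ∈ DHP p q, DHxi (p * q) ^ c.val = -1 :=
  isPrimitiveRoot_DHxi.sum_pow_val_image_Icc_mul rfl hq

theorem sum_Q (hp : 1 < p) : ∑ c ∈ DHQ p q, DHxi (p * q) ^ c.val = -1 :=
  isPrimitiveRoot_DHxi.sum_pow_val_image_Icc_mul (mul_comm q p) hp

theorem image_mul_P {a : ZMod (p * q)} (ha : IsUnit a) : (DHP p q).image (a * ·) = DHP p q := by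
  refine eq_of_subset_of_card_le (fun c hc => ?_)
    (card_image_of_injective _ ha.mul_right_injective).ge
  obtain ⟨d, hd, rfl⟩ := mem_image.1 hc
  rw [mem_P_iff] at hd ⊢
  exact ⟨ha.mul_right_eq_zero.not.2 hd.1, by rw [map_mul, hd.2, mul_zero]⟩

theorem disjoint_P_Q (hpq : p.Coprime q) :
    Disjoint (DHP p q) (DHQ p q) := disjoint_left.2 fun c hP hQ => by
  obtain ⟨hc, hl⟩ := (mem_P_iff c).1 hP
  obtain ⟨-, hr⟩ := (mem_Q_iff c).1 hQ
  exact hc ((eq_iff_cast_eq hpq).2 ⟨by rw [hl, map_zero], by rw [hr, map_zero]⟩)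

theorem not_isUnit_iff [Fact p.Prime] [Fact q.Prime] (hpq : p.Coprime q) (c : ZMod (p * q)) :
    ¬IsUnit c ↔ c ∈ insert 0 (DHP p q ∪ DHQ p q) := by
  rw [isUnit_iff hpq, mem_insert, mem_union, mem_P_iff, mem_Q_iff]
  by_cases hc : c = 0
  · simp [hc]
  · simp only [hc, ne_eq, not_false_eq_true, true_and, false_or]
    tauto

end

structure Params (p q g x : ℕ) : Prop where
  ne : p ≠ q
  gcd_eq : (p - 1).gcd (q - 1) = 2
  isPrimitiveRoot_left : IsPrimitiveRoot (g : ZMod p) (p - 1)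
  isPrimitiveRoot_right : IsPrimitiveRoot (g : ZMod q) (q - 1)
  x_left : (x : ZMod p) = g
  x_right : (x : ZMod q) = 1

namespace Params

theorem coprime [Fact p.Prime] [Fact q.Prime] (h : Params p q g x) : p.Coprime q :=
  (Nat.coprime_primes Fact.out Fact.out).2 h.ne

theorem natCast_left_ne_zero [Fact p.Prime] (h : Params p q g x) : (g : ZMod p) ≠ 0 :=
  h.isPrimitiveRoot_left.ne_zero (by have := (Fact.out : p.Prime).two_le; omega)

theorem natCast_right_ne_zero [Fact q.Prime] (h : Params p q g x) : (g : ZMod q) ≠ 0 :=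
  h.isPrimitiveRoot_right.ne_zero (by have := (Fact.out : q.Prime).two_le; omega)

theorem isUnit_natCast [Fact p.Prime] [Fact q.Prime] (h : Params p q g x) :
    IsUnit (g : ZMod (p * q)) :=
  (isUnit_iff h.coprime).2 (by simpa using ⟨h.natCast_left_ne_zero, h.natCast_right_ne_zero⟩)

theorem quadraticChar_natCast [Fact q.Prime] (h : Params p q g x) :
    quadraticChar (ZMod q) g = -1 := by
  obtain ⟨-, Q, -, -, hQ⟩ := Nat.exists_coprime (p - 1) (q - 1)
  rw [h.gcd_eq] at hQ
  have hq := (Fact.out : q.Prime).two_le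
  rw [quadraticChar_neg_one_iff_not_isSquare]
  rintro ⟨y, hy⟩
  have hy0 : y ≠ 0 := by rintro rfl; exact h.natCast_right_ne_zero (by rw [hy, mul_zero])
  refine h.isPrimitiveRoot_right.pow_ne_one_of_pos_of_lt (l := Q) (by omega) (by omega) ?_
  rw [hy, ← sq, ← pow_mul, mul_comm, ← hQ]
  exact ZMod.pow_card_sub_one_eq_one hy0

theorem mem_D0_of_pow_eq [Fact p.Prime] [Fact q.Prime] (h : Params p q g x) {c : ZMod (p * q)}
    {a b : ℕ} (ha : (g : ZMod p) ^ a = castLeft p q c)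
    (hb : (g : ZMod q) ^ (2 * b) = castRight p q c) :
    c ∈ DHD0 p q g x := by
  obtain ⟨P, Q, hco, hP, hQ⟩ := Nat.exists_coprime (p - 1) (q - 1)
  rw [h.gcd_eq] at hP hQ
  have hp := (Fact.out : p.Prime).two_le
  have hq := (Fact.out : q.Prime).two_le
  obtain ⟨t, ht, i, hi, hta, htb⟩ := Nat.exists_two_mul_add_modEq_s8 hco (by omega) (by omega) a b
  refine mem_image.2 ⟨(t, i), mem_product.2 ⟨mem_range.2 ?_, mem_range.2 hi⟩, ?_⟩
  · rwa [hP, hQ, show P * 2 * (Q * 2) = 4 * (P * Q) by ring, Nat.mul_div_cancel_left _ four_pos]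
  refine (eq_iff_cast_eq h.coprime).2 ⟨?_, ?_⟩
  · rw [← ha, map_mul, map_pow, map_pow, map_natCast, map_natCast, h.x_left, ← pow_add]
    exact h.isPrimitiveRoot_left.pow_eq_pow_of_modEq (by rwa [hP, mul_comm])
  · rw [← hb, map_mul, map_pow, map_pow, map_natCast, map_natCast, h.x_right, one_pow, mul_one]
    exact h.isPrimitiveRoot_right.pow_eq_pow_of_modEq
      (by rw [hQ, mul_comm Q]; exact htb.mul_left' 2)

theorem mem_D0_iff [Fact p.Prime] [Fact q.Prime] (h : Params p q g x) (c : ZMod (p * q)) :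
    c ∈ DHD0 p q g x ↔ castLeft p q c ≠ 0 ∧ quadraticChar (ZMod q) (castRight p q c) = 1 := by
  constructor
  · intro hc
    obtain ⟨⟨t, i⟩, -, rfl⟩ := mem_image.1 hc
    simp only [map_mul, map_pow, map_natCast, h.x_left, h.x_right, one_pow, mul_one]
    refine ⟨mul_ne_zero (pow_ne_zero _ h.natCast_left_ne_zero)
      (pow_ne_zero _ h.natCast_left_ne_zero), ?_⟩
    rw [h.quadraticChar_natCast, pow_mul, neg_one_sq, one_pow]
  rintro ⟨hl, hr⟩
  have hr0 : castRight p q c ≠ 0 := by rintro h0; simp [h0] at hr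
  obtain ⟨a, ha⟩ := ZMod.exists_pow_eq_of_isPrimitiveRoot h.isPrimitiveRoot_left hl
  obtain ⟨s, hs⟩ := ZMod.exists_pow_eq_of_isPrimitiveRoot h.isPrimitiveRoot_right hr0
  obtain ⟨b, rfl⟩ : Even s := by
    rwa [← hs, map_pow, h.quadraticChar_natCast, neg_one_pow_eq_one_iff_even (by decide)] at hr
  exact h.mem_D0_of_pow_eq ha (by rwa [two_mul])

theorem mem_D1_iff [Fact p.Prime] [Fact q.Prime] (h : Params p q g x) (c : ZMod (p * q)) :
    c ∈ DHD1 p q g x ↔ castLeft p q c ≠ 0 ∧ quadraticChar (ZMod q) (castRight p q c) = -1 := by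
  constructor
  · intro hc
    obtain ⟨d, hd, rfl⟩ := mem_image.1 hc
    obtain ⟨hl, hr⟩ := (h.mem_D0_iff d).1 hd
    rw [map_mul, map_mul, map_mul, hr, map_natCast, map_natCast, h.quadraticChar_natCast, mul_one]
    exact ⟨mul_ne_zero h.natCast_left_ne_zero hl, rfl⟩
  rintro ⟨hl, hr⟩
  set ginv := (g : ZMod (p * q))⁻¹
  have hg : (g : ZMod (p * q)) * ginv = 1 := ZMod.mul_inv_of_unit _ h.isUnit_natCast
  have hgl := congrArg (castLeft p q) hg
  have hgr := congrArg (fun y => quadraticChar (ZMod q) (castRight p q y)) hg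
  simp only [map_mul, map_one, map_natCast, h.quadraticChar_natCast] at hgl hgr
  refine mem_image.2 ⟨ginv * c, (h.mem_D0_iff _).2 ⟨?_, ?_⟩, by rw [← mul_assoc, hg, one_mul]⟩
  · rw [map_mul]
    exact mul_ne_zero (right_ne_zero_of_mul_eq_one hgl) hl
  · rw [map_mul, map_mul, hr]
    linear_combination hgr

theorem mem_D0_union_D1_iff [Fact p.Prime] [Fact q.Prime] (h : Params p q g x)
    (c : ZMod (p * q)) : c ∈ DHD0 p q g x ∪ DHD1 p q g x ↔ IsUnit c := by
  rw [isUnit_iff h.coprime, mem_union, h.mem_D0_iff, h.mem_D1_iff]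
  constructor
  · rintro (⟨hl, hr⟩ | ⟨hl, hr⟩) <;> exact ⟨hl, fun h0 => by simp [h0] at hr⟩
  · rintro ⟨hl, hr⟩
    exact (quadraticChar_dichotomy hr).imp (⟨hl, ·⟩) (⟨hl, ·⟩)

theorem disjoint_D0_D1 [Fact p.Prime] [Fact q.Prime] (h : Params p q g x) :
    Disjoint (DHD0 p q g x) (DHD1 p q g x) := disjoint_left.2 fun c h0 h1 => by
  have := ((h.mem_D0_iff c).1 h0).2.symm.trans ((h.mem_D1_iff c).1 h1).2
  exact absurd this (by decide)

theorem image_mul_D1_of_mem_D0 [Fact p.Prime] [Fact q.Prime] (h : Params p q g x)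
    {a : ZMod (p * q)} (ha : a ∈ DHD0 p q g x) :
    (DHD1 p q g x).image (a * ·) = DHD1 p q g x := by
  have hau := (h.mem_D0_union_D1_iff a).1 (mem_union_left _ ha)
  refine eq_of_subset_of_card_le (fun c hc => ?_)
    (card_image_of_injective _ hau.mul_right_injective).ge
  obtain ⟨d, hd, rfl⟩ := mem_image.1 hc
  obtain ⟨hal, har⟩ := (h.mem_D0_iff a).1 ha
  obtain ⟨hdl, hdr⟩ := (h.mem_D1_iff d).1 hd
  rw [h.mem_D1_iff, map_mul, map_mul, map_mul, har, hdr, one_mul]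
  exact ⟨mul_ne_zero hal hdl, rfl⟩

theorem image_mul_D1_of_mem_D1 [Fact p.Prime] [Fact q.Prime] (h : Params p q g x)
    {a : ZMod (p * q)} (ha : a ∈ DHD1 p q g x) :
    (DHD1 p q g x).image (a * ·) = DHD0 p q g x := by
  have hau := (h.mem_D0_union_D1_iff a).1 (mem_union_right _ ha)
  have hcard : #(DHD1 p q g x) = #(DHD0 p q g x) :=
    card_image_of_injective _ h.isUnit_natCast.mul_right_injective
  refine eq_of_subset_of_card_le (fun c hc => ?_)
    (by rw [card_image_of_injective _ hau.mul_right_injective, hcard])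
  obtain ⟨d, hd, rfl⟩ := mem_image.1 hc
  obtain ⟨hal, har⟩ := (h.mem_D1_iff a).1 ha
  obtain ⟨hdl, hdr⟩ := (h.mem_D1_iff d).1 hd
  rw [h.mem_D0_iff, map_mul, map_mul, map_mul, har, hdr]
  exact ⟨mul_ne_zero hal hdl, rfl⟩

theorem eta_D0_add_eta_D1 [Fact p.Prime] [Fact q.Prime] (h : Params p q g x) :
    DHeta (p * q) (DHD0 p q g x) + DHeta (p * q) (DHD1 p q g x) = 1 := by
  classical
  have hp := (Fact.out : p.Prime).one_lt
  have hq := (Fact.out : q.Prime).one_lt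
  have hsum := isPrimitiveRoot_DHxi.sum_pow_val_eq_zero (by nlinarith : 1 < p * q)
  have hunits : univ.filter IsUnit = DHD0 p q g x ∪ DHD1 p q g x := by
    ext c; simp [h.mem_D0_union_D1_iff]
  have hnonunits : univ.filter (¬IsUnit ·) = insert 0 (DHP p q ∪ DHQ p q) := by
    ext c; simp [not_isUnit_iff h.coprime]
  have h0 : (0 : ZMod (p * q)) ∉ DHP p q ∪ DHQ p q := by simp [mem_P_iff, mem_Q_iff]
  rw [← sum_filter_add_sum_filter_not univ IsUnit, hunits, hnonunits, sum_union h.disjoint_D0_D1,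
    sum_insert h0, sum_union (disjoint_P_Q h.coprime), sum_P hq, sum_Q hp, ZMod.val_zero,
    pow_zero] at hsum
  rw [DHeta, DHeta]
  linear_combination hsum

theorem DHSval1_eq [Fact p.Prime] [Fact q.Prime] (h : Params p q g x) {a : ZMod (p * q)}
    (ha : a ∈ DHD0 p q g x ∪ DHD1 p q g x) :
    DHSval1 p q g x (DHxi (p * q) ^ a.val) = DHeta (p * q) ((DHD1 p q g x).image (a * ·)) - 1 := by
  have hau := (h.mem_D0_union_D1_iff a).1 ha
  have hdisj : Disjoint ((DHD1 p q g x).image (a * ·)) (DHP p q) :=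
    disjoint_left.2 fun c hc hcP => by
    obtain ⟨d, hd, rfl⟩ := mem_image.1 hc
    have hunit := hau.mul ((h.mem_D0_union_D1_iff d).1 (mem_union_right _ hd))
    exact ((isUnit_iff h.coprime).1 hunit).1 ((mem_P_iff _).1 hcP).2
  calc DHSval1 p q g x (DHxi (p * q) ^ a.val)
      = ∑ c ∈ (DHD1 p q g x ∪ DHP p q).image (a * ·), DHxi (p * q) ^ c.val :=
        isPrimitiveRoot_DHxi.sum_range_ite_mem_mul_pow hau _
    _ = DHeta (p * q) ((DHD1 p q g x).image (a * ·)) - 1 := by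
        rw [image_union, image_mul_P hau, sum_union hdisj, sum_P (Fact.out : q.Prime).one_lt,
          DHeta, sub_eq_add_neg]

end Params

end DingHelleseth

theorem stmt8_general (p q g x : ℕ) (hp : Nat.Prime p) (hq : Nat.Prime q)
    (hpq : p < q)
    (hgcd : Nat.gcd (p - 1) (q - 1) = 2)
    (hgp : orderOf (g : ZMod p) = p - 1) (hgq : orderOf (g : ZMod q) = q - 1)
    (hxp : (x : ZMod p) = (g : ZMod p)) (hxq : (x : ZMod q) = 1) :
    (∀ a ∈ DHD0 p q g x,
      DHSval1 p q g x (DHxi (p * q) ^ a.val) = -DHeta (p * q) (DHD0 p q g x)) ∧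
    (∀ a ∈ DHD1 p q g x,
      DHSval1 p q g x (DHxi (p * q) ^ a.val) = -DHeta (p * q) (DHD1 p q g x)) := by
  have := Fact.mk hp
  have := Fact.mk hq
  have h : DingHelleseth.Params p q g x :=
    ⟨hpq.ne, hgcd, hgp ▸ .orderOf _, hgq ▸ .orderOf _, hxp, hxq⟩
  have hη := h.eta_D0_add_eta_D1
  refine ⟨fun a ha => ?_, fun a ha => ?_⟩
  · rw [h.DHSval1_eq (mem_union_left _ ha), h.image_mul_D1_of_mem_D0 ha]
    linear_combination hη
  · rw [h.DHSval1_eq (mem_union_right _ ha), h.image_mul_D1_of_mem_D1 ha]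
    linear_combination hη

theorem stmt8 (p q g x : ℕ) (hp : Nat.Prime p) (hq : Nat.Prime q)
    (hpo : Odd p) (hqo : Odd q) (hpq : p < q)
    (hgcd : Nat.gcd (p - 1) (q - 1) = 2)
    (hgp : orderOf (g : ZMod p) = p - 1) (hgq : orderOf (g : ZMod q) = q - 1)
    (hxp : (x : ZMod p) = (g : ZMod p)) (hxq : (x : ZMod q) = 1) :
    (∀ a ∈ DHD0 p q g x,
      DHSval1 p q g x (DHxi (p * q) ^ a.val) = -DHeta (p * q) (DHD0 p q g x)) ∧
    (∀ a ∈ DHD1 p q g x,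
      DHSval1 p q g x (DHxi (p * q) ^ a.val) = -DHeta (p * q) (DHD1 p q g x)) :=
  stmt8_general p q g x hp hq hpq hgcd hgp hgq hxp hxq
end
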